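/- arXiv:2411.07812 — 5 statements merged into one kernel-verified Lean document; each statement's English description precedes it below -/
import Mathlib

section
/- Let 2 ≤ a ≤ b and let G_{a,b} = {f_{ij} : 1 ≤ i ≤ a, 1 ≤ j ≤ b} ∪ {f_{ii'j'j} = f_{ij'}·f_{i'j} − f_{ij}·f_{i'j'} : 1 ≤ i < i' ≤ a, 1 ≤ j' < j ≤ b}. Then G_{a,b} forms a SAGBI basis of the binomial edge ring R(K_{a,b}) with respect to the monomial order <; that is, the initial algebra in_<(R(K_{a,b})) equals the k-subalgebra of S_{a,b} generated by the initial monomials in_<(f_{ij}) and in_<(f_{ii'j'j}). -/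
open MvPolynomial

/-- Variable type of `S_{a,b}`: `x_1,…,x_a`, then `x_1',…,x_b'`, then
`y_1',…,y_a'`, then `y_1,…,y_b`. -/
abbrev SVar (a b : ℕ) := Fin a ⊕ Fin b ⊕ Fin a ⊕ Fin b

variable {k : Type*} [Field k]

/-- `x_i` -/
def xv {a b : ℕ} (i : Fin a) : SVar a b := Sum.inl i
/-- `x_j'` -/
def x'v {a b : ℕ} (j : Fin b) : SVar a b := Sum.inr (Sum.inl j)
/-- `y_i'` -/
def y'v {a b : ℕ} (i : Fin a) : SVar a b := Sum.inr (Sum.inr (Sum.inl i))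
/-- `y_j` -/
def yv {a b : ℕ} (j : Fin b) : SVar a b := Sum.inr (Sum.inr (Sum.inr j))

/-- The rank of a variable in the variable ordering
`x_1 > ⋯ > x_a > x_1' > ⋯ > x_b' > y_1' > ⋯ > y_a' > y_1 > ⋯ > y_b`;
smaller rank means larger variable. -/
def varRank {a b : ℕ} : SVar a b → ℕ
  | Sum.inl i => (i : ℕ)
  | Sum.inr (Sum.inl j) => a + (j : ℕ)
  | Sum.inr (Sum.inr (Sum.inl i)) => a + b + (i : ℕ)
  | Sum.inr (Sum.inr (Sum.inr j)) => a + b + a + (j : ℕ)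

/-- Total degree of a monomial (exponent vector). -/
def monDeg {a b : ℕ} (m : SVar a b →₀ ℕ) : ℕ := m.sum fun _ e => e

/-- The graded lexicographic order `<` on monomials of `S_{a,b}`:
first compare total degrees; for equal degrees, compare lexicographically,
the first (largest) variable where the exponents differ deciding. -/
def GLexLt {a b : ℕ} (m m' : SVar a b →₀ ℕ) : Prop :=
  monDeg m < monDeg m' ∨
    (monDeg m = monDeg m' ∧
      ∃ v : SVar a b, m v < m' v ∧ ∀ w : SVar a b, varRank w < varRank v → m w = m' w)

/-- `m` is the initial (leading) monomial `in_<(f)` of `f`. -/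
def IsInitialMonomial {a b : ℕ} (f : MvPolynomial (SVar a b) k) (m : SVar a b →₀ ℕ) : Prop :=
  m ∈ f.support ∧ ∀ m' ∈ f.support, m' ≠ m → GLexLt m' m

/-- `f_{ij} = x_i y_j - x_j' y_i'`. -/
noncomputable def fgen (a b : ℕ) (k : Type*) [Field k] (i : Fin a) (j : Fin b) :
    MvPolynomial (SVar a b) k :=
  X (xv i) * X (yv j) - X (x'v j) * X (y'v i)

/-- `f_{ii'j'j} = f_{ij'} f_{i'j} - f_{ij} f_{i'j'}`. -/
noncomputable def fgen4 (a b : ℕ) (k : Type*) [Field k] (i i' : Fin a) (j' j : Fin b) :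
    MvPolynomial (SVar a b) k :=
  fgen a b k i j' * fgen a b k i' j - fgen a b k i j * fgen a b k i' j'

/-- The binomial edge ring `R(K_{a,b})`: the `k`-subalgebra of `S_{a,b}` generated by the
`f_{ij}` for `1 ≤ i ≤ a`, `1 ≤ j ≤ b`. -/
noncomputable def binomialEdgeRing (a b : ℕ) (k : Type*) [Field k] :
    Subalgebra k (MvPolynomial (SVar a b) k) :=
  Algebra.adjoin k {p | ∃ (i : Fin a) (j : Fin b), p = fgen a b k i j}

/-- The set `G_{a,b} = {f_{ij}} ∪ {f_{ii'j'j}}`. -/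
noncomputable def Gab (a b : ℕ) (k : Type*) [Field k] : Set (MvPolynomial (SVar a b) k) :=
  {p | ∃ (i : Fin a) (j : Fin b), p = fgen a b k i j} ∪
    {p | ∃ (i i' : Fin a) (j' j : Fin b), i < i' ∧ j' < j ∧ p = fgen4 a b k i i' j' j}

/-- The initial algebra of a subset `F` of `S_{a,b}` with respect to the graded
lexicographic order: the `k`-subalgebra generated by the initial monomials of all
nonzero elements of `F`. -/
noncomputable def initialAlgebra (a b : ℕ) (k : Type*) [Field k]
    (F : Set (MvPolynomial (SVar a b) k)) : Subalgebra k (MvPolynomial (SVar a b) k) :=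
  Algebra.adjoin k
    {p | ∃ g ∈ F, g ≠ 0 ∧ ∃ m : SVar a b →₀ ℕ, IsInitialMonomial g m ∧ p = monomial m (1 : k)}


section Order
variable {a b : ℕ}

lemma varRank_injective : Function.Injective (varRank (a := a) (b := b)) := by
  rintro (i | j | i | j) (i' | j' | i' | j') h <;>
    simp only [varRank] at h <;>
    (try have h1 := i.isLt) <;> (try have h2 := i'.isLt) <;>
    (try have h3 := j.isLt) <;> (try have h4 := j'.isLt) <;>
    first
      | (exfalso; omega)
      | (simp only [Sum.inl.injEq, Sum.inr.injEq]; exact Fin.ext (by omega))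

lemma monDeg_add (m n : SVar a b →₀ ℕ) : monDeg (m + n) = monDeg m + monDeg n := by
  classical
  unfold monDeg
  rw [Finsupp.sum_add_index] <;> simp

lemma glex_total (m m' : SVar a b →₀ ℕ) (h : m ≠ m') : GLexLt m m' ∨ GLexLt m' m := by
  classical
  rcases lt_trichotomy (monDeg m) (monDeg m') with hd | hd | hd
  · exact Or.inl (Or.inl hd)
  · -- equal degrees
    have hne : ∃ v, m v ≠ m' v := by
      by_contra hc
      push_neg at hc
      exact h (Finsupp.ext hc)
    set s : Finset (SVar a b) := (m.support ∪ m'.support).filter (fun v => m v ≠ m' v) with hs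
    have hsne : s.Nonempty := by
      obtain ⟨v, hv⟩ := hne
      refine ⟨v, ?_⟩
      simp only [hs, Finset.mem_filter, Finset.mem_union, Finsupp.mem_support_iff]
      exact ⟨by by_contra hc; push_neg at hc; omega, hv⟩
    obtain ⟨v0, hv0s, hv0min⟩ := Finset.exists_min_image s varRank hsne
    have hmin : ∀ w : SVar a b, varRank w < varRank v0 → m w = m' w := by
      intro w hw
      by_contra hc
      have hws : w ∈ s := by
        simp only [hs, Finset.mem_filter, Finset.mem_union, Finsupp.mem_support_iff]
        exact ⟨by by_contra hc2; push_neg at hc2; omega, hc⟩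
      exact absurd (hv0min w hws) (by omega)
    have hv0 : m v0 ≠ m' v0 := by
      have := hv0s
      simp only [hs, Finset.mem_filter] at this
      exact this.2
    rcases lt_or_gt_of_ne hv0 with hlt | hgt
    · exact Or.inl (Or.inr ⟨hd, v0, hlt, hmin⟩)
    · exact Or.inr (Or.inr ⟨hd.symm, v0, hgt, fun w hw => (hmin w hw).symm⟩)
  · exact Or.inr (Or.inl hd)

lemma glex_asymm {m m' : SVar a b →₀ ℕ} (h : GLexLt m m') : ¬ GLexLt m' m := by
  rintro (hd | ⟨hd, u, hu, humin⟩)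
  · rcases h with h | ⟨h, _⟩ <;> omega
  · rcases h with h | ⟨h, v, hv, hvmin⟩
    · omega
    · rcases lt_trichotomy (varRank v) (varRank u) with hr | hr | hr
      · have := humin v hr; omega
      · have := varRank_injective hr; subst this; omega
      · have := hvmin u hr; omega

lemma glex_irrefl (m : SVar a b →₀ ℕ) : ¬ GLexLt m m := fun h => glex_asymm h h

lemma glex_trans {m1 m2 m3 : SVar a b →₀ ℕ} (h12 : GLexLt m1 m2) (h23 : GLexLt m2 m3) :
    GLexLt m1 m3 := by
  rcases h12 with hd12 | ⟨hd12, v, hv, hvmin⟩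
  · rcases h23 with hd23 | ⟨hd23, _⟩
    · exact Or.inl (by omega)
    · exact Or.inl (by omega)
  · rcases h23 with hd23 | ⟨hd23, u, hu, humin⟩
    · exact Or.inl (by omega)
    · refine Or.inr ⟨by omega, ?_⟩
      rcases lt_trichotomy (varRank v) (varRank u) with hr | hr | hr
      · exact ⟨v, by have := humin v hr; omega,
          fun w hw => (hvmin w hw).trans (humin w (hw.trans hr))⟩
      · have := varRank_injective hr; subst this
        exact ⟨v, by omega, fun w hw => (hvmin w hw).trans (humin w hw)⟩
      · exact ⟨u, by have := hvmin u hr; omega,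
          fun w hw => (hvmin w (hw.trans hr)).trans (humin w hw)⟩

lemma glex_add_right {m m' : SVar a b →₀ ℕ} (h : GLexLt m m') (n : SVar a b →₀ ℕ) :
    GLexLt (m + n) (m' + n) := by
  rcases h with hd | ⟨hd, v, hv, hvmin⟩
  · exact Or.inl (by rw [monDeg_add, monDeg_add]; omega)
  · refine Or.inr ⟨by rw [monDeg_add, monDeg_add]; omega, v, ?_, ?_⟩
    · simp only [Finsupp.add_apply]; omega
    · intro w hw; simp only [Finsupp.add_apply, hvmin w hw]

def GLexLe {a b : ℕ} (m m' : SVar a b →₀ ℕ) : Prop := m = m' ∨ GLexLt m m'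

lemma glexle_trans {m1 m2 m3 : SVar a b →₀ ℕ} (h12 : GLexLe m1 m2) (h23 : GLexLe m2 m3) :
    GLexLe m1 m3 := by
  rcases h12 with rfl | h12
  · exact h23
  · rcases h23 with rfl | h23
    · exact Or.inr h12
    · exact Or.inr (glex_trans h12 h23)

lemma glexle_add {m m' n n' : SVar a b →₀ ℕ} (h : GLexLe m m') (h' : GLexLe n n') :
    GLexLe (m + n) (m' + n') := by
  have step1 : GLexLe (m + n) (m' + n) := by
    rcases h with rfl | h
    · exact Or.inl rfl
    · exact Or.inr (glex_add_right h n)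
  have step2 : GLexLe (m' + n) (m' + n') := by
    rcases h' with rfl | h'
    · exact Or.inl rfl
    · exact Or.inr (by rw [add_comm m' n, add_comm m' n']; exact glex_add_right h' m')
  exact glexle_trans step1 step2

/-- strict version combining `GLexLe` with one strict -/
lemma glex_add_lt {m m' n n' : SVar a b →₀ ℕ} (h : GLexLe m m') (h' : GLexLe n n')
    (hne : m ≠ m' ∨ n ≠ n') : GLexLt (m + n) (m' + n') := by
  rcases hne with hne | hne
  · rcases h with rfl | h
    · exact absurd rfl hne
    · have := glex_add_right h n
      rcases glexle_add (Or.inl rfl : GLexLe m' m') h' with heq | hlt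
      · rw [← heq]; exact this
      · exact glex_trans this hlt
  · rcases h' with rfl | h'
    · exact absurd rfl hne
    · have : GLexLt (m + n) (m + n') := by
        rw [add_comm m n, add_comm m n']; exact glex_add_right h' m
      rcases glexle_add h (Or.inl rfl : GLexLe n' n') with heq | hlt
      · rw [← heq]; exact this
      · exact glex_trans this hlt

lemma exists_glex_max (s : Finset (SVar a b →₀ ℕ)) (hs : s.Nonempty) :
    ∃ m ∈ s, ∀ m' ∈ s, m' ≠ m → GLexLt m' m := by
  classical
  induction s using Finset.induction_on with
  | empty => exact absurd hs (by simp)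
  | @insert x s0 hx ih =>
    by_cases he : s0.Nonempty
    · obtain ⟨m, hm, hmax⟩ := ih he
      by_cases hxm : x = m
      · exact ⟨m, Finset.mem_insert_of_mem hm, by
          intro m' hm' hne
          rcases Finset.mem_insert.mp hm' with rfl | hm'
          · exact absurd hxm hne
          · exact hmax m' hm' hne⟩
      · rcases glex_total x m hxm with hlt | hgt
        · exact ⟨m, Finset.mem_insert_of_mem hm, by
            intro m' hm' hne
            rcases Finset.mem_insert.mp hm' with rfl | hm'
            · exact hlt
            · exact hmax m' hm' hne⟩
        · refine ⟨x, Finset.mem_insert_self x s0, ?_⟩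
          intro m' hm' hne
          rcases Finset.mem_insert.mp hm' with rfl | hm'
          · exact absurd rfl hne
          · by_cases hm'm : m' = m
            · subst hm'm; exact hgt
            · exact glex_trans (hmax m' hm' hm'm) hgt
    · rw [Finset.not_nonempty_iff_eq_empty] at he
      subst he
      exact ⟨x, Finset.mem_insert_self x _, by
        intro m' hm' hne
        rcases Finset.mem_insert.mp hm' with rfl | hm'
        · exact absurd rfl hne
        · simp at hm'⟩

lemma initial_unique {f : MvPolynomial (SVar a b) k} {m m' : SVar a b →₀ ℕ}
    (h : IsInitialMonomial f m) (h' : IsInitialMonomial f m') : m = m' := by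
  by_contra hne
  exact glex_asymm (h.2 m' h'.1 (Ne.symm hne)) (h'.2 m h.1 hne)

lemma exists_initial {f : MvPolynomial (SVar a b) k} (hf : f ≠ 0) :
    ∃ m, IsInitialMonomial f m := by
  obtain ⟨m, hm, hmax⟩ := exists_glex_max f.support (MvPolynomial.support_nonempty.mpr hf)
  exact ⟨m, hm, hmax⟩

lemma initial_ne_zero {f : MvPolynomial (SVar a b) k} {m : SVar a b →₀ ℕ}
    (h : IsInitialMonomial f m) : f ≠ 0 :=
  MvPolynomial.support_nonempty.mp ⟨m, h.1⟩

lemma isInitial_mul {f g : MvPolynomial (SVar a b) k} {mf mg : SVar a b →₀ ℕ}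
    (hf : IsInitialMonomial f mf) (hg : IsInitialMonomial g mg) :
    IsInitialMonomial (f * g) (mf + mg) := by
  classical
  have key : ∀ u v : SVar a b →₀ ℕ, u ∈ f.support → v ∈ g.support →
      (u, v) ≠ (mf, mg) → GLexLt (u + v) (mf + mg) := by
    intro u v hu hv hne
    have hule : GLexLe u mf := by
      by_cases h : u = mf
      · exact Or.inl h
      · exact Or.inr (hf.2 u hu h)
    have hvle : GLexLe v mg := by
      by_cases h : v = mg
      · exact Or.inl h
      · exact Or.inr (hg.2 v hv h)
    apply glex_add_lt hule hvle
    by_contra hc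
    push_neg at hc
    exact hne (by rw [hc.1, hc.2])
  have hcoeff : (f * g).coeff (mf + mg) = f.coeff mf * g.coeff mg := by
    rw [MvPolynomial.coeff_mul]
    apply Finset.sum_eq_single_of_mem (mf, mg) (Finset.HasAntidiagonal.mem_antidiagonal.mpr rfl)
    intro p hp hne
    have hsum : p.1 + p.2 = mf + mg := Finset.HasAntidiagonal.mem_antidiagonal.mp hp
    by_cases hu : p.1 ∈ f.support
    · by_cases hv : p.2 ∈ g.support
      · exfalso
        have hne' : (p.1, p.2) ≠ (mf, mg) := by simpa using hne
        have hlt := key p.1 p.2 hu hv hne'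
        rw [hsum] at hlt
        exact glex_irrefl _ hlt
      · rw [MvPolynomial.notMem_support_iff] at hv; rw [hv, mul_zero]
    · rw [MvPolynomial.notMem_support_iff] at hu; rw [hu, zero_mul]
  constructor
  · rw [MvPolynomial.mem_support_iff, hcoeff]
    exact mul_ne_zero (MvPolynomial.mem_support_iff.mp hf.1)
      (MvPolynomial.mem_support_iff.mp hg.1)
  · intro m' hm' hne
    have hmem := MvPolynomial.support_mul f g hm'
    rw [Finset.mem_add] at hmem
    obtain ⟨u, hu, v, hv, rfl⟩ := hmem
    apply key u v hu hv
    intro hc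
    rw [Prod.mk.injEq] at hc
    exact hne (by rw [hc.1, hc.2])

end Order
section Columns
variable {a b : ℕ}

/-- Column index of the generic 2×(a+b) matrix. -/
abbrev Col (a b : ℕ) := Fin a ⊕ Fin b

/-- Rank of a column. -/
def κcol {a b : ℕ} : Col a b → ℕ := Sum.elim (fun i => (i : ℕ)) (fun j => a + (j : ℕ))

/-- First row of the generic matrix. -/
def Rone {a b : ℕ} : Col a b → SVar a b := Sum.elim xv x'v

/-- Second row of the generic matrix. -/
def Rtwo {a b : ℕ} : Col a b → SVar a b := Sum.elim y'v yv

lemma κcol_lt (c : Col a b) : κcol c < a + b := by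
  cases c with
  | inl i => exact lt_of_lt_of_le i.isLt (Nat.le_add_right a b)
  | inr j => simpa [κcol] using j.isLt

lemma κcol_injective : Function.Injective (κcol (a := a) (b := b)) := by
  rintro (i | j) (i' | j') h <;>
    simp only [κcol, Sum.elim_inl, Sum.elim_inr] at h <;>
    (try have h1 := i.isLt) <;> (try have h2 := i'.isLt) <;>
    (try have h3 := j.isLt) <;> (try have h4 := j'.isLt) <;>
    first
      | (exfalso; omega)
      | (simp only [Sum.inl.injEq, Sum.inr.injEq]; exact Fin.ext (by omega))

lemma varRank_Rone (c : Col a b) : varRank (Rone c : SVar a b) = κcol c := by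
  cases c <;> rfl

lemma varRank_Rtwo (c : Col a b) : varRank (Rtwo c : SVar a b) = a + b + κcol c := by
  cases c with
  | inl i => rfl
  | inr j => show a + b + a + (j : ℕ) = a + b + (a + (j : ℕ)); omega

lemma Rone_ne_Rtwo (c c' : Col a b) : (Rone c : SVar a b) ≠ Rtwo c' := by
  have h1 := varRank_Rone c
  have h2 := varRank_Rtwo c'
  have h3 := κcol_lt c
  intro h
  rw [h] at h1
  omega

lemma Rone_injective : Function.Injective (Rone (a := a) (b := b)) := by
  intro c c' h
  apply κcol_injective
  rw [← varRank_Rone c, ← varRank_Rone c', h]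

lemma Rtwo_injective : Function.Injective (Rtwo (a := a) (b := b)) := by
  intro c c' h
  apply κcol_injective
  have h2 := congrArg varRank h
  rw [varRank_Rtwo, varRank_Rtwo] at h2
  omega

/-- 2×2 minor on columns `p q`. -/
noncomputable def Dm {a b : ℕ} (k : Type*) [Field k] (p q : Col a b) :
    MvPolynomial (SVar a b) k :=
  X (Rone p) * X (Rtwo q) - X (Rone q) * X (Rtwo p)

lemma fgen_eq_Dm (i : Fin a) (j : Fin b) :
    fgen a b k i j = Dm k (Sum.inl i) (Sum.inr j) := rfl

lemma fgen4_eq_Dm (i i' : Fin a) (j' j : Fin b) :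
    fgen4 a b k i i' j' j = Dm k (Sum.inl i) (Sum.inl i') * Dm k (Sum.inr j') (Sum.inr j) := by
  show fgen a b k i j' * fgen a b k i' j - fgen a b k i j * fgen a b k i' j'
      = (X (xv i) * X (y'v i') - X (xv i') * X (y'v i)) *
        (X (x'v j') * X (yv j) - X (x'v j) * X (yv j'))
  unfold fgen
  ring

/-- Plücker relation. -/
lemma pluecker (p q r s : Col a b) :
    Dm k p q * Dm k r s = Dm (a := a) (b := b) k p s * Dm k r q - Dm k p r * Dm k s q := by
  unfold Dm
  ring

/-- the exponent vector `in(Dm p q)` -/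
noncomputable def inED {a b : ℕ} (z : Col a b × Col a b) : SVar a b →₀ ℕ :=
  Finsupp.single (Rone z.1) 1 + Finsupp.single (Rtwo z.2) 1

lemma monDeg_single (v : SVar a b) : monDeg (Finsupp.single v (1:ℕ)) = 1 := by
  unfold monDeg
  rw [Finsupp.sum_single_index]
  rfl

lemma monDeg_inED (z : Col a b × Col a b) : monDeg (inED z) = 2 := by
  unfold inED
  rw [monDeg_add, monDeg_single, monDeg_single]

lemma inED_apply_Rone (z : Col a b × Col a b) (c : Col a b) :
    inED z (Rone c) = if z.1 = c then 1 else 0 := by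
  unfold inED
  rw [Finsupp.add_apply, Finsupp.single_apply, Finsupp.single_apply,
    if_neg (Rone_ne_Rtwo c z.2).symm]
  by_cases h : z.1 = c
  · rw [if_pos h, if_pos (congrArg Rone h)]; omega
  · rw [if_neg h, if_neg (fun hc => h (Rone_injective hc))]; omega

lemma inED_apply_Rtwo (z : Col a b × Col a b) (c : Col a b) :
    inED z (Rtwo c) = if z.2 = c then 1 else 0 := by
  unfold inED
  rw [Finsupp.add_apply, Finsupp.single_apply, Finsupp.single_apply,
    if_neg (Rone_ne_Rtwo z.1 c)]
  by_cases h : z.2 = c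
  · rw [if_pos h, if_pos (congrArg Rtwo h), zero_add]
  · rw [if_neg h, if_neg (fun hc => h (Rtwo_injective hc)), zero_add]

lemma inED_apply_ne (z : Col a b × Col a b) (w : SVar a b)
    (h1 : w ≠ Rone z.1) (h2 : w ≠ Rtwo z.2) : inED z w = 0 := by
  unfold inED
  rw [Finsupp.add_apply, Finsupp.single_apply, Finsupp.single_apply,
    if_neg (Ne.symm h1), if_neg (Ne.symm h2)]
  rfl

lemma inED_ne {p q : Col a b} (h : p ≠ q) : inED (p, q) ≠ inED (q, p) := by
  intro hc
  have h1 : inED (p, q) (Rone p) = inED (q, p) (Rone p) := by rw [hc]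
  rw [inED_apply_Rone, inED_apply_Rone, if_pos rfl, if_neg (Ne.symm h)] at h1
  exact one_ne_zero h1

lemma Dm_eq_monomials (p q : Col a b) :
    Dm k p q = monomial (inED (p, q)) (1 : k) - monomial (inED (q, p)) (1 : k) := by
  unfold Dm inED
  rw [X, X, X, X, monomial_mul, monomial_mul, one_mul]

lemma coeff_Dm_self {p q : Col a b} (h : p ≠ q) :
    MvPolynomial.coeff (inED (p, q)) (Dm k p q) = 1 := by
  rw [Dm_eq_monomials, MvPolynomial.coeff_sub, MvPolynomial.coeff_monomial,
    MvPolynomial.coeff_monomial, if_pos rfl, if_neg (inED_ne (Ne.symm h)), sub_zero]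

lemma support_Dm (p q : Col a b) :
    (Dm k p q).support ⊆ {inED (p, q), inED (q, p)} := by
  intro m hm
  rw [MvPolynomial.mem_support_iff] at hm
  rw [Dm_eq_monomials, MvPolynomial.coeff_sub, MvPolynomial.coeff_monomial,
    MvPolynomial.coeff_monomial] at hm
  simp only [Finset.mem_insert, Finset.mem_singleton]
  by_cases h1 : inED (p, q) = m
  · exact Or.inl h1.symm
  · by_cases h2 : inED (q, p) = m
    · exact Or.inr h2.symm
    · rw [if_neg h1, if_neg h2] at hm
      exact absurd (by ring) hm

lemma isInitial_Dm {p q : Col a b} (h : κcol p < κcol q) :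
    IsInitialMonomial (Dm k p q) (inED (p, q)) := by
  have hpq : p ≠ q := fun hc => by rw [hc] at h; omega
  constructor
  · rw [MvPolynomial.mem_support_iff, coeff_Dm_self hpq]
    exact one_ne_zero
  · intro m' hm' hne
    have hm2 : m' = inED (q, p) := by
      rcases Finset.mem_insert.mp (support_Dm p q hm') with h1 | h1
      · exact absurd h1 hne
      · exact Finset.mem_singleton.mp h1
    subst hm2
    refine Or.inr ⟨by rw [monDeg_inED, monDeg_inED], Rone p, ?_, ?_⟩
    · rw [inED_apply_Rone, inED_apply_Rone, if_pos rfl, if_neg (Ne.symm hpq)]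
      exact Nat.zero_lt_one
    · intro w hw
      rw [varRank_Rone] at hw
      have hne1 : ∀ c : Col a b, κcol p ≤ κcol c → w ≠ Rone c := by
        intro c hc hcw
        rw [hcw, varRank_Rone] at hw
        omega
      have hne2 : ∀ c : Col a b, w ≠ Rtwo c := by
        intro c hcw
        rw [hcw, varRank_Rtwo] at hw
        have := κcol_lt p
        omega
      rw [inED_apply_ne _ w (hne1 q (le_of_lt h)) (hne2 p),
        inED_apply_ne _ w (hne1 p le_rfl) (hne2 q)]

end Columns
section Products
variable {a b : ℕ}

/-- pair of columns -/
abbrev CPair (a b : ℕ) := Col a b × Col a b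

noncomputable def prodD {a b : ℕ} (k : Type*) [Field k] (M : Multiset (CPair a b)) :
    MvPolynomial (SVar a b) k :=
  (M.map fun z => Dm k z.1 z.2).prod

noncomputable def inE {a b : ℕ} (M : Multiset (CPair a b)) : SVar a b →₀ ℕ :=
  (M.map inED).sum

def GoodM (M : Multiset (CPair a b)) : Prop := ∀ z ∈ M, κcol z.1 < κcol z.2

def CmpP (y z : CPair a b) : Prop := κcol y.1 ≤ κcol z.1 ∧ κcol y.2 ≤ κcol z.2

def StdM (M : Multiset (CPair a b)) : Prop := ∀ y ∈ M, ∀ z ∈ M, CmpP y z ∨ CmpP z y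

def colm (M : Multiset (CPair a b)) : Multiset (Col a b) :=
  M.map Prod.fst + M.map Prod.snd

def BalM (M : Multiset (CPair a b)) : Prop :=
  Multiset.countP (fun c => c.isLeft) (colm M) = Multiset.countP (fun c => c.isRight) (colm M)

def measM (M : Multiset (CPair a b)) : ℕ := (M.map fun z => κcol z.1 * κcol z.2).sum

@[simp] lemma prodD_zero : prodD (a := a) (b := b) k 0 = 1 := rfl

@[simp] lemma prodD_cons (z : CPair a b) (M : Multiset (CPair a b)) :
    prodD k (z ::ₘ M) = Dm k z.1 z.2 * prodD k M := by
  unfold prodD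
  rw [Multiset.map_cons, Multiset.prod_cons]

@[simp] lemma prodD_add (M N : Multiset (CPair a b)) :
    prodD k (M + N) = prodD k M * prodD k N := by
  unfold prodD
  rw [Multiset.map_add, Multiset.prod_add]

@[simp] lemma inE_zero : inE (a := a) (b := b) 0 = 0 := rfl

@[simp] lemma inE_cons (z : CPair a b) (M : Multiset (CPair a b)) :
    inE (z ::ₘ M) = inED z + inE M := by
  unfold inE
  rw [Multiset.map_cons, Multiset.sum_cons]

lemma isInitial_one : IsInitialMonomial (1 : MvPolynomial (SVar a b) k) 0 := by
  constructor
  · rw [MvPolynomial.mem_support_iff, MvPolynomial.coeff_one, if_pos rfl]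
    exact one_ne_zero
  · intro m' hm' hne
    rw [MvPolynomial.mem_support_iff, MvPolynomial.coeff_one] at hm'
    rw [if_neg (fun hc : (0 : SVar a b →₀ ℕ) = m' => hne hc.symm)] at hm'
    exact absurd rfl hm'

lemma isInitial_prodD {M : Multiset (CPair a b)} (hG : GoodM M) :
    IsInitialMonomial (prodD k M) (inE M) := by
  induction M using Multiset.induction_on with
  | empty => exact isInitial_one
  | cons z M ih =>
    rw [prodD_cons, inE_cons]
    refine isInitial_mul ?_ (ih ?_)
    · exact isInitial_Dm (hG z (Multiset.mem_cons_self z M))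
    · intro y hy
      exact hG y (Multiset.mem_cons_of_mem hy)

lemma GoodM_cons {z : CPair a b} {M : Multiset (CPair a b)} :
    GoodM (z ::ₘ M) ↔ κcol z.1 < κcol z.2 ∧ GoodM M := by
  constructor
  · intro h
    exact ⟨h z (Multiset.mem_cons_self z M), fun y hy => h y (Multiset.mem_cons_of_mem hy)⟩
  · rintro ⟨h1, h2⟩ y hy
    rcases Multiset.mem_cons.mp hy with rfl | hy
    · exact h1
    · exact h2 y hy

lemma colm_cons (z : CPair a b) (M : Multiset (CPair a b)) :
    colm (z ::ₘ M) = z.1 ::ₘ z.2 ::ₘ colm M := by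
  unfold colm
  rw [Multiset.map_cons, Multiset.map_cons]
  ext c
  simp [Multiset.count_cons]
  ring

lemma measM_cons (z : CPair a b) (M : Multiset (CPair a b)) :
    measM (z ::ₘ M) = κcol z.1 * κcol z.2 + measM M := by
  unfold measM
  rw [Multiset.map_cons, Multiset.sum_cons]

lemma measM_le {M : Multiset (CPair a b)} (hG : GoodM M) :
    measM M ≤ Multiset.card M * ((a + b) * (a + b)) := by
  induction M using Multiset.induction_on with
  | empty => simp [measM]
  | cons z M ih =>
    rw [measM_cons, Multiset.card_cons]
    have h1 : κcol z.1 * κcol z.2 ≤ (a + b) * (a + b) :=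
      Nat.mul_le_mul (le_of_lt (κcol_lt z.1)) (le_of_lt (κcol_lt z.2))
    have h2 := ih (fun y hy => hG y (Multiset.mem_cons_of_mem hy))
    calc κcol z.1 * κcol z.2 + measM M ≤ (a+b)*(a+b) + Multiset.card M * ((a+b)*(a+b)) :=
          Nat.add_le_add h1 h2
      _ = (Multiset.card M + 1) * ((a + b) * (a + b)) := by ring

end Products
section Spanning
variable {a b : ℕ}

lemma rearrange_ineq (A B C D : ℕ) (h1 : A < B) (h2 : C < D) :
    A * D + B * C < A * C + B * D := by
  nlinarith

/-- standard products with prescribed column multiset -/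
def SpanSet (k : Type*) [Field k] {a b : ℕ} (N : Multiset (Col a b)) :
    Set (MvPolynomial (SVar a b) k) :=
  {g | ∃ M', GoodM M' ∧ StdM M' ∧ colm M' = N ∧ g = prodD k M'}

lemma span_std_aux : ∀ (n : ℕ) (M : Multiset (CPair a b)), GoodM M →
    Multiset.card M * ((a + b) * (a + b)) - measM M = n →
    prodD k M ∈ Submodule.span k (SpanSet k (colm M)) := by
  intro n
  induction n using Nat.strong_induction_on with
  | _ n ih =>
    intro M hG hn
    by_cases hstd : StdM M
    · exact Submodule.subset_span ⟨M, hG, hstd, rfl, rfl⟩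
    · simp only [StdM, not_forall] at hstd
      obtain ⟨y, hy, z, hz, hnc⟩ := hstd
      rw [not_or] at hnc
      obtain ⟨hc1, hc2⟩ := hnc
      simp only [CmpP, not_and_or, not_le] at hc1 hc2
      have horient : ∃ y' z' : CPair a b, y' ∈ M ∧ z' ∈ M ∧
          κcol y'.1 < κcol z'.1 ∧ κcol z'.2 < κcol y'.2 := by
        rcases lt_trichotomy (κcol y.1) (κcol z.1) with h | h | h
        · rcases hc1 with h' | h'
          · omega
          · exact ⟨y, z, hy, hz, h, h'⟩
        · rcases hc1 with h' | h'
          · omega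
          · rcases hc2 with h'' | h'' <;> omega
        · rcases hc2 with h' | h'
          · omega
          · exact ⟨z, y, hz, hy, h, h'⟩
      clear hc1 hc2 hy hz
      obtain ⟨y, z, hy, hz, h1, h2⟩ := horient
      have hyz : y ≠ z := fun hc => by rw [hc] at h1; omega
      have hz' : z ∈ M.erase y := (Multiset.mem_erase_of_ne (Ne.symm hyz)).mpr hz
      set M₀ := (M.erase y).erase z with hM₀
      have e1 : M.erase y = z ::ₘ M₀ := (Multiset.cons_erase hz').symm
      have e2 : M = y ::ₘ z ::ₘ M₀ := by
        rw [← e1, Multiset.cons_erase hy]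
      have hM₀sub : ∀ w ∈ M₀, w ∈ M := fun w hw =>
        Multiset.mem_of_mem_erase (Multiset.mem_of_mem_erase hw)
      obtain ⟨p, q⟩ := y
      obtain ⟨r, s⟩ := z
      simp only at h1 h2
      have hpq : κcol p < κcol q := hG (p, q) hy
      have hrs : κcol r < κcol s := hG (r, s) hz
      have hG₀ : GoodM M₀ := fun w hw => hG w (hM₀sub w hw)
      set M₁ : Multiset (CPair a b) := (p, s) ::ₘ (r, q) ::ₘ M₀ with hM₁
      set M₂ : Multiset (CPair a b) := (p, r) ::ₘ (s, q) ::ₘ M₀ with hM₂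
      have hG₁ : GoodM M₁ := by
        rw [hM₁, GoodM_cons, GoodM_cons]
        refine ⟨?_, ?_, hG₀⟩ <;> simp only <;> omega
      have hG₂ : GoodM M₂ := by
        rw [hM₂, GoodM_cons, GoodM_cons]
        refine ⟨?_, ?_, hG₀⟩ <;> simp only <;> omega
      have hcard1 : Multiset.card M₁ = Multiset.card M := by
        rw [e2, hM₁]; simp
      have hcard2 : Multiset.card M₂ = Multiset.card M := by
        rw [e2, hM₂]; simp
      have hcolm1 : colm M₁ = colm M := by
        rw [e2, hM₁, colm_cons, colm_cons, colm_cons, colm_cons]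
        ext c
        simp only [Multiset.count_cons]
        split_ifs <;> omega
      have hcolm2 : colm M₂ = colm M := by
        rw [e2, hM₂, colm_cons, colm_cons, colm_cons, colm_cons]
        ext c
        simp only [Multiset.count_cons]
        split_ifs <;> omega
      have hmeas : measM M = κcol p * κcol q + (κcol r * κcol s + measM M₀) := by
        rw [e2, measM_cons, measM_cons]
      have hmeas1 : measM M₁ = κcol p * κcol s + (κcol r * κcol q + measM M₀) := by
        rw [hM₁, measM_cons, measM_cons]
      have hmeas2 : measM M₂ = κcol p * κcol r + (κcol s * κcol q + measM M₀) := by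
        rw [hM₂, measM_cons, measM_cons]
      have hlt1 : measM M < measM M₁ := by
        rw [hmeas, hmeas1]
        have := rearrange_ineq (κcol p) (κcol r) (κcol s) (κcol q) h1 h2
        omega
      have hlt2 : measM M < measM M₂ := by
        rw [hmeas, hmeas2]
        have hc := rearrange_ineq (κcol p) (κcol s) (κcol r) (κcol q)
          (lt_trans h1 hrs) (lt_trans hrs h2)
        rw [mul_comm (κcol s) (κcol r)] at hc
        omega
      have hb1 : measM M₁ ≤ Multiset.card M₁ * ((a + b) * (a + b)) := measM_le hG₁
      have hb2 : measM M₂ ≤ Multiset.card M₂ * ((a + b) * (a + b)) := measM_le hG₂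
      have hn1 : Multiset.card M₁ * ((a + b) * (a + b)) - measM M₁ < n := by
        rw [hcard1]; rw [hcard1] at hb1; omega
      have hn2 : Multiset.card M₂ * ((a + b) * (a + b)) - measM M₂ < n := by
        rw [hcard2]; rw [hcard2] at hb2; omega
      have m1 := ih _ hn1 M₁ hG₁ rfl
      have m2 := ih _ hn2 M₂ hG₂ rfl
      rw [hcolm1] at m1
      rw [hcolm2] at m2
      have heq : prodD k M = prodD k M₁ - prodD k M₂ := by
        rw [e2, hM₁, hM₂, prodD_cons, prodD_cons, prodD_cons, prodD_cons,
          prodD_cons, prodD_cons]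
        simp only
        rw [← mul_assoc, ← mul_assoc, ← mul_assoc, pluecker]
        ring
      rw [heq]
      exact Submodule.sub_mem _ m1 m2

lemma span_std {M : Multiset (CPair a b)} (hG : GoodM M) :
    prodD k M ∈ Submodule.span k (SpanSet k (colm M)) :=
  span_std_aux _ M hG rfl

end Spanning
section Injectivity
variable {a b : ℕ}

lemma cmpP_refl (y : CPair a b) : CmpP y y := ⟨le_rfl, le_rfl⟩

lemma cmpP_trans {x y z : CPair a b} (h1 : CmpP x y) (h2 : CmpP y z) : CmpP x z :=
  ⟨le_trans h1.1 h2.1, le_trans h1.2 h2.2⟩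

lemma exists_least : ∀ (M : Multiset (CPair a b)), StdM M → M ≠ 0 →
    ∃ z ∈ M, ∀ y ∈ M, CmpP z y := by
  intro M
  induction M using Multiset.induction_on with
  | empty => intro _ h; exact absurd rfl h
  | cons w M₀ ih =>
    intro hstd _
    by_cases h0 : M₀ = 0
    · subst h0
      refine ⟨w, Multiset.mem_cons_self w 0, ?_⟩
      intro y hy
      rcases Multiset.mem_cons.mp hy with rfl | hy
      · exact cmpP_refl y
      · exact absurd hy (by simp)
    · have hstd₀ : StdM M₀ := fun y hy z hz =>
        hstd y (Multiset.mem_cons_of_mem hy) z (Multiset.mem_cons_of_mem hz)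
      obtain ⟨z₀, hz₀, hleast⟩ := ih hstd₀ h0
      rcases hstd w (Multiset.mem_cons_self w M₀) z₀ (Multiset.mem_cons_of_mem hz₀) with hc | hc
      · refine ⟨w, Multiset.mem_cons_self w M₀, ?_⟩
        intro y hy
        rcases Multiset.mem_cons.mp hy with rfl | hy
        · exact cmpP_refl y
        · exact cmpP_trans hc (hleast y hy)
      · refine ⟨z₀, Multiset.mem_cons_of_mem hz₀, ?_⟩
        intro y hy
        rcases Multiset.mem_cons.mp hy with rfl | hy
        · exact hc
        · exact hleast y hy

lemma std_eq_of_maps : ∀ (n : ℕ) (M M' : Multiset (CPair a b)), Multiset.card M = n →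
    StdM M → StdM M' → M.map Prod.fst = M'.map Prod.fst →
    M.map Prod.snd = M'.map Prod.snd → M = M' := by
  intro n
  induction n with
  | zero =>
    intro M M' hc _ _ hf _
    have hM : M = 0 := Multiset.card_eq_zero.mp hc
    subst hM
    rw [Multiset.map_zero] at hf
    have := Multiset.map_eq_zero.mp hf.symm
    rw [this]
  | succ n ihn =>
    intro M M' hc hstd hstd' hf hs
    have hM : M ≠ 0 := by
      intro h; rw [h] at hc; simp at hc
    have hcard' : Multiset.card M' = n + 1 := by
      have h1 := congrArg Multiset.card hf
      rw [Multiset.card_map, Multiset.card_map] at h1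
      omega
    have hM' : M' ≠ 0 := by
      intro h; rw [h] at hcard'; simp at hcard'
    obtain ⟨z, hz, hleast⟩ := exists_least M hstd hM
    obtain ⟨z', hz', hleast'⟩ := exists_least M' hstd' hM'
    have hzz' : z = z' := by
      have h1 : κcol z.1 ≤ κcol z'.1 := by
        have : z'.1 ∈ M.map Prod.fst := by rw [hf]; exact Multiset.mem_map_of_mem _ hz'
        obtain ⟨y, hy, hy1⟩ := Multiset.mem_map.mp this
        rw [← hy1]
        exact (hleast y hy).1
      have h2 : κcol z'.1 ≤ κcol z.1 := by
        have : z.1 ∈ M'.map Prod.fst := by rw [← hf]; exact Multiset.mem_map_of_mem _ hz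
        obtain ⟨y, hy, hy1⟩ := Multiset.mem_map.mp this
        rw [← hy1]
        exact (hleast' y hy).1
      have h3 : κcol z.2 ≤ κcol z'.2 := by
        have : z'.2 ∈ M.map Prod.snd := by rw [hs]; exact Multiset.mem_map_of_mem _ hz'
        obtain ⟨y, hy, hy1⟩ := Multiset.mem_map.mp this
        rw [← hy1]
        exact (hleast y hy).2
      have h4 : κcol z'.2 ≤ κcol z.2 := by
        have : z.2 ∈ M'.map Prod.snd := by rw [← hs]; exact Multiset.mem_map_of_mem _ hz
        obtain ⟨y, hy, hy1⟩ := Multiset.mem_map.mp this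
        rw [← hy1]
        exact (hleast' y hy).2
      have e1 : z.1 = z'.1 := κcol_injective (le_antisymm h1 h2)
      have e2 : z.2 = z'.2 := κcol_injective (le_antisymm h3 h4)
      exact Prod.ext e1 e2
    subst hzz'
    set M₀ := M.erase z with hM₀
    set M₀' := M'.erase z with hM₀'
    have e1 : M = z ::ₘ M₀ := (Multiset.cons_erase hz).symm
    have e2 : M' = z ::ₘ M₀' := (Multiset.cons_erase hz').symm
    have hstd₀ : StdM M₀ := fun y hy w hw =>
      hstd y (Multiset.mem_of_mem_erase hy) w (Multiset.mem_of_mem_erase hw)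
    have hstd₀' : StdM M₀' := fun y hy w hw =>
      hstd' y (Multiset.mem_of_mem_erase hy) w (Multiset.mem_of_mem_erase hw)
    have hc₀ : Multiset.card M₀ = n := by
      rw [e1, Multiset.card_cons] at hc
      omega
    have hf₀ : M₀.map Prod.fst = M₀'.map Prod.fst := by
      rw [e1, e2, Multiset.map_cons, Multiset.map_cons] at hf
      exact (Multiset.cons_inj_right _).mp hf
    have hs₀ : M₀.map Prod.snd = M₀'.map Prod.snd := by
      rw [e1, e2, Multiset.map_cons, Multiset.map_cons] at hs
      exact (Multiset.cons_inj_right _).mp hs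
    rw [e1, e2, ihn M₀ M₀' hc₀ hstd₀ hstd₀' hf₀ hs₀]

lemma inE_apply_Rone (M : Multiset (CPair a b)) (c : Col a b) :
    inE M (Rone c) = (M.map Prod.fst).count c := by
  induction M using Multiset.induction_on with
  | empty => rfl
  | cons z M₀ ih =>
    rw [inE_cons, Finsupp.add_apply, ih, Multiset.map_cons, Multiset.count_cons,
      inED_apply_Rone]
    by_cases h : z.1 = c
    · rw [if_pos h, if_pos h.symm]; omega
    · rw [if_neg h, if_neg (Ne.symm h)]; omega

lemma inE_apply_Rtwo (M : Multiset (CPair a b)) (c : Col a b) :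
    inE M (Rtwo c) = (M.map Prod.snd).count c := by
  induction M using Multiset.induction_on with
  | empty => rfl
  | cons z M₀ ih =>
    rw [inE_cons, Finsupp.add_apply, ih, Multiset.map_cons, Multiset.count_cons,
      inED_apply_Rtwo]
    by_cases h : z.2 = c
    · rw [if_pos h, if_pos h.symm]; omega
    · rw [if_neg h, if_neg (Ne.symm h)]; omega

lemma std_inE_inj {M M' : Multiset (CPair a b)} (h : StdM M) (h' : StdM M')
    (he : inE M = inE M') : M = M' := by
  apply std_eq_of_maps (Multiset.card M) M M' rfl h h'
  · ext c
    rw [← inE_apply_Rone, ← inE_apply_Rone, he]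
  · ext c
    rw [← inE_apply_Rtwo, ← inE_apply_Rtwo, he]

end Injectivity
section Balance
variable {a b : ℕ}

/-- generating set of `initialAlgebra a b k (Gab a b k)` -/
def IGen (a b : ℕ) (k : Type*) [Field k] : Set (MvPolynomial (SVar a b) k) :=
  {p | ∃ g ∈ Gab a b k, g ≠ 0 ∧
    ∃ m : SVar a b →₀ ℕ, IsInitialMonomial g m ∧ p = monomial m (1 : k)}

lemma cnt_total (N : Multiset (Col a b)) :
    Multiset.countP (fun c => c.isLeft) N + Multiset.countP (fun c => c.isRight) N
      = Multiset.card N := by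
  induction N using Multiset.induction_on with
  | empty => rfl
  | cons c N ih =>
    rw [Multiset.countP_cons, Multiset.countP_cons, Multiset.card_cons]
    cases c <;> simp <;> omega

lemma mem_colm {c : Col a b} {M : Multiset (CPair a b)} (h : c ∈ colm M) :
    ∃ z ∈ M, z.1 = c ∨ z.2 = c := by
  unfold colm at h
  rcases Multiset.mem_add.mp h with h | h
  · obtain ⟨z, hz, hzc⟩ := Multiset.mem_map.mp h
    exact ⟨z, hz, Or.inl hzc⟩
  · obtain ⟨z, hz, hzc⟩ := Multiset.mem_map.mp h
    exact ⟨z, hz, Or.inr hzc⟩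

lemma card_colm (M : Multiset (CPair a b)) :
    Multiset.card (colm M) = 2 * Multiset.card M := by
  unfold colm
  rw [Multiset.card_add, Multiset.card_map, Multiset.card_map]
  omega

lemma monomial_inE_mem : ∀ (n : ℕ) (M : Multiset (CPair a b)), Multiset.card M = n →
    GoodM M → BalM M →
    (monomial (inE M) (1 : k)) ∈ Algebra.adjoin k (IGen a b k) := by
  intro n
  induction n using Nat.strong_induction_on with
  | _ n ih =>
    intro M hcard hG hB
    rcases Nat.eq_zero_or_pos n with rfl | hn
    · have hM : M = 0 := Multiset.card_eq_zero.mp hcard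
      subst hM
      rw [inE_zero]
      have h1 : (monomial (0 : SVar a b →₀ ℕ) (1 : k)) = 1 := by simp
      rw [h1]
      exact one_mem _
    · by_cases hmix : ∃ z ∈ M, ∃ (i : Fin a) (j : Fin b), z = (Sum.inl i, Sum.inr j)
      · obtain ⟨z, hz, i, j, rfl⟩ := hmix
        set M₀ := M.erase (Sum.inl i, Sum.inr j) with hM₀
        have e : M = (Sum.inl i, Sum.inr j) ::ₘ M₀ := (Multiset.cons_erase hz).symm
        rw [e, inE_cons, ← one_mul (1 : k), ← MvPolynomial.monomial_mul]
        apply mul_mem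
        · apply Algebra.subset_adjoin
          have hinit : IsInitialMonomial (fgen a b k i j)
              (inED ((Sum.inl i : Col a b), (Sum.inr j : Col a b))) := by
            rw [fgen_eq_Dm]
            apply isInitial_Dm
            simp only [κcol, Sum.elim_inl, Sum.elim_inr]
            omega
          exact ⟨fgen a b k i j, Or.inl ⟨i, j, rfl⟩, initial_ne_zero hinit, _, hinit, rfl⟩
        · have hG₀ : GoodM M₀ := fun w hw => hG w (Multiset.mem_of_mem_erase hw)
          have hB₀ : BalM M₀ := by
            unfold BalM at hB ⊢
            rw [e, colm_cons, Multiset.countP_cons, Multiset.countP_cons,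
              Multiset.countP_cons, Multiset.countP_cons] at hB
            simp only [Sum.isLeft_inl, Sum.isRight_inl, Sum.isLeft_inr, Sum.isRight_inr,
              if_true, if_false, Bool.false_eq_true, ↓reduceIte] at hB
            omega
          have hc₀ : Multiset.card M₀ = n - 1 := by
            rw [e, Multiset.card_cons] at hcard
            omega
          exact ih (n - 1) (by omega) M₀ hc₀ hG₀ hB₀
      · have hpure : ∀ z ∈ M, (∃ i i' : Fin a, z = (Sum.inl i, Sum.inl i')) ∨
            (∃ j' j : Fin b, z = (Sum.inr j', Sum.inr j)) := by
          rintro ⟨z1, z2⟩ hz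
          cases z1 with
          | inl i =>
            cases z2 with
            | inl i' => exact Or.inl ⟨i, i', rfl⟩
            | inr j => exact absurd ⟨(Sum.inl i, Sum.inr j), hz, i, j, rfl⟩ hmix
          | inr j =>
            cases z2 with
            | inl i =>
              exfalso
              have h1 := hG (Sum.inr j, Sum.inl i) hz
              simp only [κcol, Sum.elim_inl, Sum.elim_inr] at h1
              have h2 := i.isLt
              omega
            | inr j2 => exact Or.inr ⟨j, j2, rfl⟩
        have htot := cnt_total (colm M)
        rw [card_colm, hcard] at htot
        have hrow : ∃ z ∈ M, ∃ i i' : Fin a, z = (Sum.inl i, Sum.inl i') := by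
          by_contra hc
          push_neg at hc
          have hL : Multiset.countP (fun c : Col a b => c.isLeft) (colm M) = 0 := by
            rw [Multiset.countP_eq_zero]
            intro c hcm
            obtain ⟨z, hz, hor⟩ := mem_colm hcm
            rcases hpure z hz with ⟨i, i', rfl⟩ | ⟨j', j, rfl⟩
            · exact absurd rfl (hc _ hz i i')
            · rcases hor with rfl | rfl <;> simp
          unfold BalM at hB
          omega
        have hcolp : ∃ z ∈ M, ∃ j' j : Fin b, z = (Sum.inr j', Sum.inr j) := by
          by_contra hc
          push_neg at hc
          have hR : Multiset.countP (fun c : Col a b => c.isRight) (colm M) = 0 := by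
            rw [Multiset.countP_eq_zero]
            intro c hcm
            obtain ⟨z, hz, hor⟩ := mem_colm hcm
            rcases hpure z hz with ⟨i, i', rfl⟩ | ⟨j', j, rfl⟩
            · rcases hor with rfl | rfl <;> simp
            · exact absurd rfl (hc _ hz j' j)
          unfold BalM at hB
          omega
        obtain ⟨z, hz, i, i', rfl⟩ := hrow
        obtain ⟨z', hz', j', j, rfl⟩ := hcolp
        have hne : ((Sum.inr j' : Col a b), (Sum.inr j : Col a b)) ≠
            ((Sum.inl i : Col a b), (Sum.inl i' : Col a b)) := by simp
        have hz'' : ((Sum.inr j' : Col a b), (Sum.inr j : Col a b)) ∈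
            M.erase (Sum.inl i, Sum.inl i') := (Multiset.mem_erase_of_ne hne).mpr hz'
        set M₀ := (M.erase (Sum.inl i, Sum.inl i')).erase (Sum.inr j', Sum.inr j) with hM₀
        have e1 : M.erase (Sum.inl i, Sum.inl i') = (Sum.inr j', Sum.inr j) ::ₘ M₀ :=
          (Multiset.cons_erase hz'').symm
        have e : M = (Sum.inl i, Sum.inl i') ::ₘ (Sum.inr j', Sum.inr j) ::ₘ M₀ := by
          rw [← e1, Multiset.cons_erase hz]
        have hii : (i : ℕ) < (i' : ℕ) := by
          have h1 := hG (Sum.inl i, Sum.inl i') hz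
          simpa only [κcol, Sum.elim_inl] using h1
        have hjj : (j' : ℕ) < (j : ℕ) := by
          have h1 := hG (Sum.inr j', Sum.inr j) hz'
          simp only [κcol, Sum.elim_inr] at h1
          omega
        rw [e, inE_cons, inE_cons, ← add_assoc, ← one_mul (1 : k), ← MvPolynomial.monomial_mul]
        apply mul_mem
        · apply Algebra.subset_adjoin
          have hinit : IsInitialMonomial (fgen4 a b k i i' j' j)
              (inED ((Sum.inl i : Col a b), (Sum.inl i' : Col a b))
                + inED ((Sum.inr j' : Col a b), (Sum.inr j : Col a b))) := by
            rw [fgen4_eq_Dm]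
            refine isInitial_mul (isInitial_Dm ?_) (isInitial_Dm ?_) <;>
              simp only [κcol, Sum.elim_inl, Sum.elim_inr] <;> omega
          refine ⟨fgen4 a b k i i' j' j,
            Or.inr ⟨i, i', j', j, Fin.lt_def.mpr hii, Fin.lt_def.mpr hjj, rfl⟩,
            initial_ne_zero hinit, _, hinit, rfl⟩
        · have hG₀ : GoodM M₀ := fun w hw =>
            hG w (Multiset.mem_of_mem_erase (Multiset.mem_of_mem_erase hw))
          have hB₀ : BalM M₀ := by
            unfold BalM at hB ⊢
            rw [e, colm_cons, colm_cons] at hB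
            rw [Multiset.countP_cons, Multiset.countP_cons, Multiset.countP_cons,
              Multiset.countP_cons, Multiset.countP_cons, Multiset.countP_cons,
              Multiset.countP_cons, Multiset.countP_cons] at hB
            simp only [Sum.isLeft_inl, Sum.isRight_inl, Sum.isLeft_inr, Sum.isRight_inr,
              if_true, if_false, Bool.false_eq_true, ↓reduceIte] at hB
            omega
          have hc₀ : Multiset.card M₀ = n - 2 := by
            rw [e, Multiset.card_cons, Multiset.card_cons] at hcard
            omega
          exact ih (n - 2) (by omega) M₀ hc₀ hG₀ hB₀

end Balance
section Assembly
variable {a b : ℕ}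

/-- balanced standard products -/
def SBal (a b : ℕ) (k : Type*) [Field k] : Set (MvPolynomial (SVar a b) k) :=
  {g | ∃ M : Multiset (CPair a b), GoodM M ∧ StdM M ∧ BalM M ∧ g = prodD k M}

lemma bal_of_colm_eq {M M' : Multiset (CPair a b)} (h : colm M' = colm M) (hb : BalM M) :
    BalM M' := by
  unfold BalM at hb ⊢
  rw [h]
  exact hb

lemma colm_add (M N : Multiset (CPair a b)) : colm (M + N) = colm M + colm N := by
  unfold colm
  rw [Multiset.map_add, Multiset.map_add]
  ext c
  simp only [Multiset.count_add]
  omega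

lemma balM_add {M N : Multiset (CPair a b)} (hM : BalM M) (hN : BalM N) : BalM (M + N) := by
  unfold BalM at hM hN ⊢
  rw [colm_add, Multiset.countP_add, Multiset.countP_add]
  omega

lemma goodM_add {M N : Multiset (CPair a b)} (hM : GoodM M) (hN : GoodM N) : GoodM (M + N) := by
  intro z hz
  rcases Multiset.mem_add.mp hz with h | h
  · exact hM z h
  · exact hN z h

lemma mem_span_SBal {g : MvPolynomial (SVar a b) k} (hg : g ∈ binomialEdgeRing a b k) :
    g ∈ Submodule.span k (SBal a b k) := by
  have h1 : g ∈ Submodule.span k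
      ((Submonoid.closure {p | ∃ (i : Fin a) (j : Fin b), p = fgen a b k i j} :
        Submonoid (MvPolynomial (SVar a b) k)) : Set (MvPolynomial (SVar a b) k)) := by
    rw [← Algebra.adjoin_eq_span]
    exact hg
  refine Submodule.span_le.mpr ?_ h1
  intro x hx
  have hrep : ∃ M : Multiset (CPair a b), GoodM M ∧ BalM M ∧ x = prodD k M := by
    induction hx using Submonoid.closure_induction with
    | mem y hy =>
      obtain ⟨i, j, rfl⟩ := hy
      refine ⟨{((Sum.inl i : Col a b), (Sum.inr j : Col a b))}, ?_, ?_, ?_⟩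
      · intro z hz
        rw [Multiset.mem_singleton] at hz
        subst hz
        simp only [κcol, Sum.elim_inl, Sum.elim_inr]
        have := i.isLt
        omega
      · unfold BalM
        show Multiset.countP _ (colm (((Sum.inl i : Col a b), (Sum.inr j : Col a b)) ::ₘ 0)) = _
        rw [colm_cons]
        rfl
      · rw [fgen_eq_Dm]
        show Dm k (Sum.inl i) (Sum.inr j) =
          prodD k (((Sum.inl i : Col a b), (Sum.inr j : Col a b)) ::ₘ 0)
        rw [prodD_cons, prodD_zero, mul_one]
    | one =>
      exact ⟨0, by intro z hz; simp at hz, by unfold BalM; rfl, rfl⟩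
    | mul y z hy hz ihy ihz =>
      obtain ⟨M₁, hG₁, hB₁, rfl⟩ := ihy
      obtain ⟨M₂, hG₂, hB₂, rfl⟩ := ihz
      exact ⟨M₁ + M₂, goodM_add hG₁ hG₂, balM_add hB₁ hB₂, (prodD_add M₁ M₂).symm⟩
  obtain ⟨M, hGM, hBM, rfl⟩ := hrep
  have h2 := span_std (k := k) hGM
  refine Submodule.span_le.mpr ?_ h2
  rintro w ⟨M', hG', hS', hcolm', rfl⟩
  exact Submodule.subset_span ⟨M', hG', hS', bal_of_colm_eq hcolm' hBM, rfl⟩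

lemma initial_mem_adjoin {g : MvPolynomial (SVar a b) k}
    (hg : g ∈ Submodule.span k (SBal a b k))
    {m : SVar a b →₀ ℕ} (him : IsInitialMonomial g m) :
    monomial m (1 : k) ∈ Algebra.adjoin k (IGen a b k) := by
  classical
  obtain ⟨c, hsupp, hsum⟩ := Submodule.mem_span_set.mp hg
  have hchoice : ∀ p ∈ c.support, ∃ M : Multiset (CPair a b),
      GoodM M ∧ StdM M ∧ BalM M ∧ p = prodD k M := fun p hp => hsupp hp
  choose F hF1 hF2 hF3 hF4 using hchoice
  have hg0 : g ≠ 0 := initial_ne_zero him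
  have hsne : c.support.Nonempty := by
    by_contra hc
    rw [Finset.not_nonempty_iff_eq_empty] at hc
    have : c = 0 := Finsupp.support_eq_empty.mp hc
    subst this
    rw [Finsupp.sum_zero_index] at hsum
    exact hg0 hsum.symm
  -- p's initial monomial
  have hpin : ∀ p (hp : p ∈ c.support), IsInitialMonomial p (inE (F p hp)) := by
    intro p hp
    have h := isInitial_prodD (k := k) (hF1 p hp)
    rwa [← hF4 p hp] at h
  -- maximum
  set Sm : Finset (SVar a b →₀ ℕ) :=
    c.support.attach.image (fun p => inE (F p.1 p.2)) with hSm
  have hSne : Sm.Nonempty :=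
    Finset.Nonempty.image (Finset.attach_nonempty_iff.mpr hsne) _
  obtain ⟨mstar, hmem, hmax⟩ := exists_glex_max Sm hSne
  rw [hSm] at hmem
  obtain ⟨pstar, _, hpstar⟩ := Finset.mem_image.mp hmem
  have hle : ∀ p (hp : p ∈ c.support), GLexLe (inE (F p hp)) mstar := by
    intro p hp
    by_cases h : inE (F p hp) = mstar
    · exact Or.inl h
    · exact Or.inr (hmax _ (Finset.mem_image_of_mem _ (Finset.mem_attach _ ⟨p, hp⟩)) h)
  -- injectivity: any p with inE (F p) = mstar equals pstar.1
  have hinj : ∀ p (hp : p ∈ c.support), inE (F p hp) = mstar → p = pstar.1 := by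
    intro p hp h
    have h2 : inE (F p hp) = inE (F pstar.1 pstar.2) := by rw [h, ← hpstar]
    have h3 := std_inE_inj (hF2 p hp) (hF2 pstar.1 pstar.2) h2
    rw [hF4 p hp, hF4 pstar.1 pstar.2, h3]
  -- coefficient of g at mstar
  have hcoeffg : ∀ m' : SVar a b →₀ ℕ,
      MvPolynomial.coeff m' g = ∑ p ∈ c.support, c p * MvPolynomial.coeff m' p := by
    intro m'
    rw [← hsum, Finsupp.sum, MvPolynomial.coeff_sum]
    apply Finset.sum_congr rfl
    intro p hp
    rw [MvPolynomial.coeff_smul]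
    rfl
  have hcstar : MvPolynomial.coeff mstar g ≠ 0 := by
    rw [hcoeffg]
    rw [Finset.sum_eq_single pstar.1]
    · apply mul_ne_zero
      · exact Finsupp.mem_support_iff.mp pstar.2
      · have := (hpin pstar.1 pstar.2).1
        rw [hpstar] at this
        exact MvPolynomial.mem_support_iff.mp this
    · intro p hp hne
      have hzero : MvPolynomial.coeff mstar p = 0 := by
        rw [← MvPolynomial.notMem_support_iff]
        intro hmem'
        have h1 : GLexLe mstar (inE (F p hp)) := by
          by_cases h : mstar = inE (F p hp)
          · exact Or.inl h
          · exact Or.inr ((hpin p hp).2 mstar hmem' h)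
        rcases h1 with h1 | h1
        · exact hne (hinj p hp h1.symm)
        · rcases hle p hp with h2 | h2
          · exact hne (hinj p hp h2)
          · exact glex_asymm h1 h2
      rw [hzero, mul_zero]
    · intro h
      exact absurd pstar.2 h
  -- m = mstar
  have hmm : m = mstar := by
    by_contra hne
    have h1 : GLexLt mstar m := him.2 mstar (MvPolynomial.mem_support_iff.mpr hcstar)
      (fun hc => hne hc.symm)
    have h2 : GLexLe m mstar := by
      have hm : m ∈ g.support := him.1
      rw [MvPolynomial.mem_support_iff, hcoeffg] at hm
      obtain ⟨p, hp, hpne⟩ := Finset.exists_ne_zero_of_sum_ne_zero hm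
      have hmp : m ∈ p.support := by
        rw [MvPolynomial.mem_support_iff]
        intro hc
        rw [hc, mul_zero] at hpne
        exact hpne rfl
      have h3 : GLexLe m (inE (F p hp)) := by
        by_cases h : m = inE (F p hp)
        · exact Or.inl h
        · exact Or.inr ((hpin p hp).2 m hmp h)
      exact glexle_trans h3 (hle p hp)
    rcases h2 with h2 | h2
    · exact hne h2
    · exact glex_asymm h2 h1
  subst hmm
  rw [← hpstar]
  exact monomial_inE_mem _ (F pstar.1 pstar.2) rfl (hF1 pstar.1 pstar.2) (hF3 pstar.1 pstar.2)

end Assembly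
lemma initialAlgebra_Gab_eq (a b : ℕ) :
    initialAlgebra a b k (Gab a b k) = Algebra.adjoin k (IGen a b k) := rfl

/-- **Theorem 1.1.** `G_{a,b}` is a SAGBI basis of `R(K_{a,b})` with respect to the graded
lexicographic order: the initial algebra of `R(K_{a,b})` is the `k`-subalgebra generated by
the initial monomials of the elements of `G_{a,b}`. -/
theorem Gab_is_SAGBI_basis (a b : ℕ) (ha : 2 ≤ a) (hab : a ≤ b) :
    initialAlgebra a b k ((binomialEdgeRing a b k : Subalgebra k (MvPolynomial (SVar a b) k)) :
        Set (MvPolynomial (SVar a b) k))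
      = initialAlgebra a b k (Gab a b k) := by
  apply le_antisymm
  · unfold initialAlgebra
    apply Algebra.adjoin_le
    rintro p ⟨g, hgR, hg0, m, him, rfl⟩
    have hgR' : g ∈ binomialEdgeRing a b k := hgR
    have hspan := mem_span_SBal hgR'
    exact initial_mem_adjoin hspan him
  · unfold initialAlgebra
    apply Algebra.adjoin_le
    rintro p ⟨g, hgG, hg0, m, him, rfl⟩
    apply Algebra.subset_adjoin
    refine ⟨g, ?_, hg0, m, him, rfl⟩
    show g ∈ binomialEdgeRing a b k
    rcases hgG with ⟨i, j, rfl⟩ | ⟨i, i', j', j, _, _, rfl⟩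
    · exact Algebra.subset_adjoin ⟨i, j, rfl⟩
    · unfold fgen4
      exact sub_mem
        (mul_mem (Algebra.subset_adjoin ⟨i, j', rfl⟩) (Algebra.subset_adjoin ⟨i', j, rfl⟩))
        (mul_mem (Algebra.subset_adjoin ⟨i, j, rfl⟩) (Algebra.subset_adjoin ⟨i', j', rfl⟩))
end

section
/- Let 2 ≤ a ≤ b. The k-subalgebra of S_{a,b} generated by the monomials x_i·y_j (for 1 ≤ i ≤ a, 1 ≤ j ≤ b) together with the monomials x_i·x_{j'}'·y_{i'}'·y_j (for 1 ≤ i < i' ≤ a, 1 ≤ j' < j ≤ b) is isomorphic as a k-algebra to the Hibi ring k[Π_{a,b}] of the poset Π_{a,b}. -/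
open MvPolynomial

/-- The underlying set of the poset `Π_{a,b}`: elements
`e_1,…,e_{a-1}` (first component, index `i` represents `e_{i+1}`),
`e_2',…,e_{a-1}'` (second component, index `i` represents `e_{i+2}'`),
`f_1',…,f_{b-1}'` (third component, index `j` represents `f_{j+1}'`),
`f_2,…,f_b` (fourth component, index `j` represents `f_{j+2}`). -/
abbrev PiElt (a b : ℕ) := Fin (a - 1) ⊕ Fin (a - 2) ⊕ Fin (b - 1) ⊕ Fin (b - 1)

/-- The cover relations of `Π_{a,b}`:
`e_{a−1} ≺ e_{a−2} ≺ ⋯ ≺ e_1`; `f_1' ≺ e_{a−1}' ≺ ⋯ ≺ e_2'`; `f_2 ≺ f_3 ≺ ⋯ ≺ f_b`;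
`f_1' ≺ f_2' ≺ ⋯ ≺ f_{b−1}'`; `e_{a−1} ≺ f_1'`; `e_{i−1} ≺ e_i'` for `2 ≤ i ≤ a−1`;
`f_{j+1} ≺ f_j'` for `1 ≤ j ≤ b−1`. -/
def piCover (a b : ℕ) : PiElt a b → PiElt a b → Prop
  | Sum.inl i, Sum.inl i' => (i : ℕ) = (i' : ℕ) + 1
  | Sum.inl i, Sum.inr (Sum.inl i') => (i : ℕ) = (i' : ℕ)
  | Sum.inl i, Sum.inr (Sum.inr (Sum.inl j')) => (i : ℕ) + 2 = a ∧ (j' : ℕ) = 0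
  | Sum.inr (Sum.inl i), Sum.inr (Sum.inl i') => (i : ℕ) = (i' : ℕ) + 1
  | Sum.inr (Sum.inr (Sum.inl j)), Sum.inr (Sum.inl i') => (j : ℕ) = 0 ∧ (i' : ℕ) + 3 = a
  | Sum.inr (Sum.inr (Sum.inl j)), Sum.inr (Sum.inr (Sum.inl j')) => (j' : ℕ) = (j : ℕ) + 1
  | Sum.inr (Sum.inr (Sum.inr j)), Sum.inr (Sum.inr (Sum.inl j')) => (j : ℕ) = (j' : ℕ)
  | Sum.inr (Sum.inr (Sum.inr j)), Sum.inr (Sum.inr (Sum.inr j')) => (j' : ℕ) = (j : ℕ) + 1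
  | _, _ => False

/-- The partial order of `Π_{a,b}`, generated by the cover relations. -/
def piLe (a b : ℕ) : PiElt a b → PiElt a b → Prop := Relation.ReflTransGen (piCover a b)

/-- A poset ideal (down-closed subset) of `Π_{a,b}`. -/
def IsPosetIdeal (a b : ℕ) (I : Set (PiElt a b)) : Prop :=
  ∀ x ∈ I, ∀ y, piLe a b y x → y ∈ I

/-- The Hibi ring `k[Π_{a,b}]`: the `k`-subalgebra of the polynomial ring with variables
`t_p` (`p ∈ Π_{a,b}`, variable `some p`) and `s` (variable `none`) generated by the
monomials `(∏_{p ∈ I} t_p)·s` where `I` ranges over the poset ideals of `Π_{a,b}`. -/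
noncomputable def HibiRing (a b : ℕ) (k : Type*) [Field k] :
    Subalgebra k (MvPolynomial (Option (PiElt a b)) k) :=
  Algebra.adjoin k
    {g | ∃ I : Finset (PiElt a b), IsPosetIdeal a b (I : Set (PiElt a b)) ∧
      g = (∏ p ∈ I, MvPolynomial.X (some p)) * MvPolynomial.X none}

namespace HibiProof

open Finsupp Finset

variable {a b : ℕ}

abbrev Vec (a b : ℕ) := SVar a b →₀ ℤ

noncomputable def gx (a b m : ℕ) : Vec a b := if h : m < a then Finsupp.single (xv ⟨m, h⟩) 1 else 0
noncomputable def gx' (a b m : ℕ) : Vec a b := if h : m < b then Finsupp.single (x'v ⟨m, h⟩) 1 else 0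
noncomputable def gy' (a b m : ℕ) : Vec a b := if h : m < a then Finsupp.single (y'v ⟨m, h⟩) 1 else 0
noncomputable def gy (a b m : ℕ) : Vec a b := if h : m < b then Finsupp.single (yv ⟨m, h⟩) 1 else 0

lemma gx_coe (i : Fin a) : gx a b ↑i = Finsupp.single (xv i) 1 := by
  rw [gx, dif_pos i.isLt]
lemma gx'_coe (j : Fin b) : gx' a b ↑j = Finsupp.single (x'v j) 1 := by
  rw [gx', dif_pos j.isLt]
lemma gy'_coe (i : Fin a) : gy' a b ↑i = Finsupp.single (y'v i) 1 := by
  rw [gy', dif_pos i.isLt]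
lemma gy_coe (j : Fin b) : gy a b ↑j = Finsupp.single (yv j) 1 := by
  rw [gy, dif_pos j.isLt]

noncomputable def L (a b : ℕ) : Option (PiElt a b) → Vec a b
  | Option.none => gx a b (a-1) + gy a b 0
  | Option.some (Sum.inl i) => gx a b i - gx a b (i+1)
  | Option.some (Sum.inr (Sum.inl i)) => gy' a b (i+1) - gy' a b (i+2)
  | Option.some (Sum.inr (Sum.inr (Sum.inl j))) =>
      if (j : ℕ) = 0 then gx' a b 0 + gy' a b (a-1) else gx' a b j - gx' a b (j-1)
  | Option.some (Sum.inr (Sum.inr (Sum.inr j))) => gy a b (j+1) - gy a b j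

end HibiProof
section Telescope
variable {M : Type*} [AddCommGroup M]

lemma sum_range_if_le (g : ℕ → M) (s n : ℕ) :
    ∑ m ∈ Finset.range n, (if s ≤ m then g m else 0) = ∑ m ∈ Finset.Ico s n, g m := by
  rw [← Finset.sum_filter]
  congr 1
  ext m
  simp only [Finset.mem_filter, Finset.mem_range, Finset.mem_Ico]
  omega

lemma sum_range_if_lt (g : ℕ → M) (t n : ℕ) (h : t ≤ n) :
    ∑ m ∈ Finset.range n, (if m < t then g m else 0) = ∑ m ∈ Finset.range t, g m := by
  rw [← Finset.sum_filter]
  congr 1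
  ext m
  simp only [Finset.mem_filter, Finset.mem_range]
  omega

lemma sum_Ico_telescope (g : ℕ → M) (s n : ℕ) (h : s ≤ n) :
    ∑ m ∈ Finset.Ico s n, (g m - g (m+1)) = g s - g n := by
  induction n, h using Nat.le_induction with
  | base => simp
  | succ n hn ih => rw [Finset.sum_Ico_succ_top (by omega), ih]; abel

end Telescope

namespace HibiProof
variable {a b : ℕ}

lemma sumE (s : ℕ) (hs : s ≤ a - 1) :
    (∑ i₀ : Fin (a-1), if s ≤ (i₀:ℕ) then L a b (Option.some (Sum.inl i₀)) else 0)
      = gx a b s - gx a b (a-1) := by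
  have h1 : ∀ i₀ : Fin (a-1),
      (if s ≤ (i₀:ℕ) then L a b (Option.some (Sum.inl i₀)) else 0)
      = (fun m => if s ≤ m then gx a b m - gx a b (m+1) else 0) (i₀:ℕ) := by
    intro i₀; simp only [L]
  rw [Finset.sum_congr rfl (fun i₀ _ => h1 i₀),
    Fin.sum_univ_eq_sum_range (fun m => if s ≤ m then gx a b m - gx a b (m+1) else 0) (a-1),
    sum_range_if_le, sum_Ico_telescope _ _ _ hs]

lemma sumF (t : ℕ) (ht : t ≤ b - 1) :
    (∑ j₀ : Fin (b-1), if (j₀:ℕ) < t then L a b (Option.some (Sum.inr (Sum.inr (Sum.inr j₀)))) else 0)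
      = gy a b t - gy a b 0 := by
  have h1 : ∀ j₀ : Fin (b-1),
      (if (j₀:ℕ) < t then L a b (Option.some (Sum.inr (Sum.inr (Sum.inr j₀)))) else 0)
      = (fun m => if m < t then gy a b (m+1) - gy a b m else 0) (j₀:ℕ) := by
    intro j₀; simp only [L]
  rw [Finset.sum_congr rfl (fun j₀ _ => h1 j₀),
    Fin.sum_univ_eq_sum_range (fun m => if m < t then gy a b (m+1) - gy a b m else 0) (b-1),
    sum_range_if_lt _ _ _ ht, Finset.sum_range_sub (fun m => gy a b m)]

lemma sumE' (ha : 2 ≤ a) (s' : ℕ) (h1 : 1 ≤ s') (h2 : s' ≤ a - 1) :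
    (∑ i₀ : Fin (a-2), if s' ≤ (i₀:ℕ)+1 then L a b (Option.some (Sum.inr (Sum.inl i₀))) else 0)
      = gy' a b s' - gy' a b (a-1) := by
  have h1' : ∀ i₀ : Fin (a-2),
      (if s' ≤ (i₀:ℕ)+1 then L a b (Option.some (Sum.inr (Sum.inl i₀))) else 0)
      = (fun m => if s' - 1 ≤ m then gy' a b (m+1) - gy' a b (m+2) else 0) (i₀:ℕ) := by
    intro i₀
    dsimp only
    by_cases h : s' ≤ (i₀:ℕ)+1
    · rw [if_pos h, if_pos (by omega : s' - 1 ≤ (i₀:ℕ))]; simp only [L]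
    · rw [if_neg h, if_neg (by omega : ¬ s' - 1 ≤ (i₀:ℕ))]
  rw [Finset.sum_congr rfl (fun i₀ _ => h1' i₀),
    Fin.sum_univ_eq_sum_range (fun m => if s' - 1 ≤ m then gy' a b (m+1) - gy' a b (m+2) else 0) (a-2),
    sum_range_if_le]
  have h3 : ∑ m ∈ Finset.Ico (s'-1) (a-2), (gy' a b (m+1) - gy' a b (m+2))
      = ∑ m ∈ Finset.Ico (s'-1) (a-2), ((fun t => gy' a b (t+1)) m - (fun t => gy' a b (t+1)) (m+1)) := rfl
  rw [h3, sum_Ico_telescope _ _ _ (by omega)]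
  have e1 : s' - 1 + 1 = s' := by omega
  have e2 : a - 2 + 1 = a - 1 := by omega
  rw [e1, e2]

lemma sumF' (ha : 2 ≤ a) (hb : 2 ≤ b) (t' : ℕ) (ht' : t' ≤ b - 2) :
    (∑ j₀ : Fin (b-1), if (j₀:ℕ) ≤ t' then L a b (Option.some (Sum.inr (Sum.inr (Sum.inl j₀)))) else 0)
      = gx' a b t' + gy' a b (a-1) := by
  set Lf : ℕ → Vec a b :=
    fun m => if m = 0 then gx' a b 0 + gy' a b (a-1) else gx' a b m - gx' a b (m-1) with hLf
  have h1 : ∀ j₀ : Fin (b-1),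
      (if (j₀:ℕ) ≤ t' then L a b (Option.some (Sum.inr (Sum.inr (Sum.inl j₀)))) else 0)
      = (fun m => if m < t' + 1 then Lf m else 0) (j₀:ℕ) := by
    intro j₀
    dsimp only
    by_cases h : (j₀:ℕ) ≤ t'
    · rw [if_pos h, if_pos (by omega : (j₀:ℕ) < t'+1)]; simp only [L, hLf]
    · rw [if_neg h, if_neg (by omega : ¬ (j₀:ℕ) < t'+1)]
  rw [Finset.sum_congr rfl (fun j₀ _ => h1 j₀),
    Fin.sum_univ_eq_sum_range (fun m => if m < t' + 1 then Lf m else 0) (b-1),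
    sum_range_if_lt _ _ _ (by omega)]
  have h2 : ∑ m ∈ Finset.range (t'+1), Lf m
      = Lf 0 + ∑ m ∈ Finset.Ico 1 (t'+1), Lf m := by
    rw [Finset.range_eq_Ico, Finset.sum_eq_sum_Ico_succ_bot (by omega)]
  rw [h2]
  have h3 : ∑ m ∈ Finset.Ico 1 (t'+1), Lf m
      = ∑ m ∈ Finset.range t', (gx' a b (m+1) - gx' a b m) := by
    rw [Finset.sum_Ico_eq_sum_range]
    refine Finset.sum_congr (by congr 1) (fun m _ => ?_)
    simp only [hLf, if_neg (by omega : ¬ 1 + m = 0)]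
    rw [show 1 + m = m + 1 by omega, show m + 1 - 1 = m by omega]
  rw [h3, Finset.sum_range_sub (fun m => gx' a b m)]
  simp only [hLf, if_pos rfl]
  abel

end HibiProof
namespace HibiProof
variable {a b : ℕ}

def predP (i : Fin a) (j : Fin b) : PiElt a b → Bool
  | Sum.inl i₀ => decide ((i:ℕ) ≤ (i₀:ℕ))
  | Sum.inr (Sum.inl _) => false
  | Sum.inr (Sum.inr (Sum.inl _)) => false
  | Sum.inr (Sum.inr (Sum.inr j₀)) => decide ((j₀:ℕ) < (j:ℕ))

def predQ (i i' : Fin a) (j' j : Fin b) : PiElt a b → Bool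
  | Sum.inl i₀ => decide ((i:ℕ) ≤ (i₀:ℕ))
  | Sum.inr (Sum.inl i₀) => decide ((i':ℕ) ≤ (i₀:ℕ) + 1)
  | Sum.inr (Sum.inr (Sum.inl j₀)) => decide ((j₀:ℕ) ≤ (j':ℕ))
  | Sum.inr (Sum.inr (Sum.inr j₀)) => decide ((j₀:ℕ) < (j:ℕ))

def IP (i : Fin a) (j : Fin b) : Finset (PiElt a b) :=
  Finset.univ.filter (fun p => predP i j p = true)

def IQ (i i' : Fin a) (j' j : Fin b) : Finset (PiElt a b) :=
  Finset.univ.filter (fun p => predQ i i' j' j p = true)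

lemma sum_IP (ha : 2 ≤ a) (hb : 2 ≤ b) (i : Fin a) (j : Fin b) :
    (∑ p ∈ IP i j, L a b (Option.some p)) + L a b Option.none
      = Finsupp.single (xv i) 1 + Finsupp.single (yv j) 1 := by
  rw [IP, Finset.sum_filter]
  rw [Fintype.sum_sum_type, Fintype.sum_sum_type, Fintype.sum_sum_type]
  simp only [predP, decide_eq_true_eq, Bool.false_eq_true, if_false, Finset.sum_const_zero]
  rw [sumE (i:ℕ) (by omega), sumF (j:ℕ) (by omega)]
  have hn : L a b Option.none = gx a b (a-1) + gy a b 0 := rfl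
  rw [hn, ← gx_coe i, ← gy_coe j]
  abel

lemma sum_IQ (ha : 2 ≤ a) (hb : 2 ≤ b) (i i' : Fin a) (j' j : Fin b)
    (hii' : i < i') (hj'j : j' < j) :
    (∑ p ∈ IQ i i' j' j, L a b (Option.some p)) + L a b Option.none
      = Finsupp.single (xv i) 1 + Finsupp.single (x'v j') 1
        + Finsupp.single (y'v i') 1 + Finsupp.single (yv j) 1 := by
  have hii : (i:ℕ) < (i':ℕ) := hii'
  have hjj : (j':ℕ) < (j:ℕ) := hj'j
  rw [IQ, Finset.sum_filter]
  rw [Fintype.sum_sum_type, Fintype.sum_sum_type, Fintype.sum_sum_type]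
  simp only [predQ, decide_eq_true_eq]
  rw [sumE (i:ℕ) (by omega), sumF (j:ℕ) (by omega),
    sumE' ha (i':ℕ) (by omega) (by omega), sumF' ha hb (j':ℕ) (by omega)]
  have hn : L a b Option.none = gx a b (a-1) + gy a b 0 := rfl
  rw [hn, ← gx_coe i, ← gy_coe j, ← gx'_coe j', ← gy'_coe i']
  abel

end HibiProof
namespace HibiProof
variable {a b : ℕ}

lemma coverClosed_ideal (S : Set (PiElt a b))
    (h : ∀ x y, piCover a b y x → x ∈ S → y ∈ S) : IsPosetIdeal a b S := by
  intro x hx y hyx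
  induction hyx using Relation.ReflTransGen.head_induction_on with
  | refl => exact hx
  | head hcov _ ih => exact h _ _ hcov ih

lemma isPosetIdeal_IP (i : Fin a) (j : Fin b) :
    IsPosetIdeal a b (↑(IP i j) : Set (PiElt a b)) := by
  apply coverClosed_ideal
  intro x y hcov hx
  simp only [IP, Finset.coe_filter, Set.mem_setOf_eq, Finset.mem_univ, true_and] at hx ⊢
  rcases x with i₀ | i₀ | j₀ | j₀ <;> rcases y with i₁ | i₁ | j₁ | j₁ <;>
    simp only [piCover] at hcov <;>
    simp only [predP, decide_eq_true_eq, Bool.false_eq_true] at hx ⊢ <;> omega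

lemma isPosetIdeal_IQ (i i' : Fin a) (j' j : Fin b) (hii' : i < i') (hj'j : j' < j) :
    IsPosetIdeal a b (↑(IQ i i' j' j) : Set (PiElt a b)) := by
  have hii : (i:ℕ) < (i':ℕ) := hii'
  have hjj : (j':ℕ) < (j:ℕ) := hj'j
  have hi'a : (i':ℕ) < a := i'.isLt
  apply coverClosed_ideal
  intro x y hcov hx
  simp only [IQ, Finset.coe_filter, Set.mem_setOf_eq, Finset.mem_univ, true_and] at hx ⊢
  rcases x with i₀ | i₀ | j₀ | j₀ <;> rcases y with i₁ | i₁ | j₁ | j₁ <;>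
    simp only [piCover] at hcov <;>
    simp only [predQ, decide_eq_true_eq, Bool.false_eq_true] at hx ⊢ <;> omega

-- chain piLe lemmas
lemma le_E (i₀ i₁ : Fin (a-1)) (h : (i₀:ℕ) ≤ (i₁:ℕ)) :
    piLe a b (Sum.inl i₁) (Sum.inl i₀) := by
  obtain ⟨d, hd⟩ : ∃ d, (i₁:ℕ) = (i₀:ℕ) + d := ⟨(i₁:ℕ) - (i₀:ℕ), by omega⟩
  induction d generalizing i₁ with
  | zero => have : i₁ = i₀ := Fin.ext (by omega); exact this ▸ Relation.ReflTransGen.refl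
  | succ d ih =>
      have hlt : (i₀:ℕ) + d < a - 1 := by omega
      refine Relation.ReflTransGen.head ?_ (ih ⟨(i₀:ℕ)+d, hlt⟩ (by simp only [Fin.val_mk]; omega) (by simp only [Fin.val_mk]))
      show piCover a b _ _
      simp only [piCover, Fin.val_mk]
      omega

lemma le_E' (i₀ i₁ : Fin (a-2)) (h : (i₀:ℕ) ≤ (i₁:ℕ)) :
    piLe a b (Sum.inr (Sum.inl i₁)) (Sum.inr (Sum.inl i₀)) := by
  obtain ⟨d, hd⟩ : ∃ d, (i₁:ℕ) = (i₀:ℕ) + d := ⟨(i₁:ℕ) - (i₀:ℕ), by omega⟩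
  induction d generalizing i₁ with
  | zero => have : i₁ = i₀ := Fin.ext (by omega); exact this ▸ Relation.ReflTransGen.refl
  | succ d ih =>
      have hlt : (i₀:ℕ) + d < a - 2 := by omega
      refine Relation.ReflTransGen.head ?_ (ih ⟨(i₀:ℕ)+d, hlt⟩ (by simp only [Fin.val_mk]; omega) (by simp only [Fin.val_mk]))
      show piCover a b _ _
      simp only [piCover, Fin.val_mk]
      omega

lemma le_F (j₀ j₁ : Fin (b-1)) (h : (j₀:ℕ) ≤ (j₁:ℕ)) :
    piLe a b (Sum.inr (Sum.inr (Sum.inr j₀))) (Sum.inr (Sum.inr (Sum.inr j₁))) := by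
  obtain ⟨d, hd⟩ : ∃ d, (j₁:ℕ) = (j₀:ℕ) + d := ⟨(j₁:ℕ) - (j₀:ℕ), by omega⟩
  induction d generalizing j₀ with
  | zero => have : j₁ = j₀ := Fin.ext (by omega); exact this ▸ Relation.ReflTransGen.refl
  | succ d ih =>
      have hlt : (j₀:ℕ) + 1 < b - 1 := by omega
      refine Relation.ReflTransGen.head ?_ (ih ⟨(j₀:ℕ)+1, hlt⟩ (by simp only [Fin.val_mk]; omega) (by simp only [Fin.val_mk]; omega))
      show piCover a b _ _
      simp only [piCover, Fin.val_mk]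

lemma le_F' (j₀ j₁ : Fin (b-1)) (h : (j₀:ℕ) ≤ (j₁:ℕ)) :
    piLe a b (Sum.inr (Sum.inr (Sum.inl j₀))) (Sum.inr (Sum.inr (Sum.inl j₁))) := by
  obtain ⟨d, hd⟩ : ∃ d, (j₁:ℕ) = (j₀:ℕ) + d := ⟨(j₁:ℕ) - (j₀:ℕ), by omega⟩
  induction d generalizing j₀ with
  | zero => have : j₁ = j₀ := Fin.ext (by omega); exact this ▸ Relation.ReflTransGen.refl
  | succ d ih =>
      have hlt : (j₀:ℕ) + 1 < b - 1 := by omega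
      refine Relation.ReflTransGen.head ?_ (ih ⟨(j₀:ℕ)+1, hlt⟩ (by simp only [Fin.val_mk]; omega) (by simp only [Fin.val_mk]; omega))
      show piCover a b _ _
      simp only [piCover, Fin.val_mk]

-- threshold lemmas
lemma up_threshold {n : ℕ} (S : Finset (Fin n))
    (h : ∀ i₀ i₁ : Fin n, i₀ ∈ S → (i₀:ℕ) ≤ (i₁:ℕ) → i₁ ∈ S) :
    ∃ s, s ≤ n ∧ ∀ i : Fin n, (i ∈ S ↔ s ≤ (i:ℕ)) := by
  by_cases hS : S.Nonempty
  · refine ⟨(S.min' hS : ℕ), (S.min' hS).isLt.le, fun i => ⟨fun hi => S.min'_le i hi, fun hi => ?_⟩⟩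
    exact h _ _ (S.min'_mem hS) hi
  · refine ⟨n, le_rfl, fun i => ⟨fun hi => absurd ⟨i, hi⟩ hS, fun hi => absurd i.isLt (by omega)⟩⟩

lemma down_threshold {n : ℕ} (S : Finset (Fin n))
    (h : ∀ i₀ i₁ : Fin n, i₀ ∈ S → (i₁:ℕ) ≤ (i₀:ℕ) → i₁ ∈ S) :
    ∃ t, t ≤ n ∧ ∀ i : Fin n, (i ∈ S ↔ (i:ℕ) < t) := by
  by_cases hS : S.Nonempty
  · refine ⟨(S.max' hS : ℕ) + 1, (S.max' hS).isLt, fun i =>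
      ⟨fun hi => Nat.lt_succ_of_le (S.le_max' i hi), fun hi => ?_⟩⟩
    exact h _ _ (S.max'_mem hS) (by omega)
  · exact ⟨0, by omega, fun i => ⟨fun hi => absurd ⟨i, hi⟩ hS, fun hi => absurd hi (by omega)⟩⟩

end HibiProof
namespace HibiProof
variable {a b : ℕ}

lemma classify (ha : 2 ≤ a) (hb : 2 ≤ b) (I : Finset (PiElt a b))
    (hI : IsPosetIdeal a b (↑I : Set (PiElt a b))) :
    (∃ i j, I = IP i j) ∨
    (∃ (i i' : Fin a) (j' j : Fin b), i < i' ∧ j' < j ∧ I = IQ i i' j' j) := by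
  have hcl : ∀ x ∈ I, ∀ y, piLe a b y x → y ∈ I := by
    intro x hx y hle
    exact hI x hx y hle
  -- thresholds
  obtain ⟨sE, hsE, hEm⟩ := up_threshold (Finset.univ.filter (fun i₀ : Fin (a-1) => Sum.inl i₀ ∈ I))
    (fun i₀ i₁ h₀ hle => by
      simp only [Finset.mem_filter, Finset.mem_univ, true_and] at h₀ ⊢
      exact hcl _ h₀ _ (le_E i₀ i₁ hle))
  obtain ⟨sE', hsE', hE'm⟩ := up_threshold
    (Finset.univ.filter (fun i₀ : Fin (a-2) => Sum.inr (Sum.inl i₀) ∈ I))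
    (fun i₀ i₁ h₀ hle => by
      simp only [Finset.mem_filter, Finset.mem_univ, true_and] at h₀ ⊢
      exact hcl _ h₀ _ (le_E' i₀ i₁ hle))
  obtain ⟨tF, htF, hFm⟩ := down_threshold
    (Finset.univ.filter (fun j₀ : Fin (b-1) => Sum.inr (Sum.inr (Sum.inr j₀)) ∈ I))
    (fun j₀ j₁ h₀ hle => by
      simp only [Finset.mem_filter, Finset.mem_univ, true_and] at h₀ ⊢
      exact hcl _ h₀ _ (le_F j₁ j₀ hle))
  obtain ⟨tF', htF', hF'm⟩ := down_threshold
    (Finset.univ.filter (fun j₀ : Fin (b-1) => Sum.inr (Sum.inr (Sum.inl j₀)) ∈ I))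
    (fun j₀ j₁ h₀ hle => by
      simp only [Finset.mem_filter, Finset.mem_univ, true_and] at h₀ ⊢
      exact hcl _ h₀ _ (le_F' j₁ j₀ hle))
  simp only [Finset.mem_filter, Finset.mem_univ, true_and] at hEm hE'm hFm hF'm
  by_cases ht0 : tF' = 0
  · -- no primed part: I = IP
    left
    have hE'empty : ∀ i₀ : Fin (a-2), ¬ (Sum.inr (Sum.inl i₀) ∈ I) := by
      intro i₀ hi₀
      have hb1 : 0 < b - 1 := by omega
      have ha3 : 3 ≤ a := by have := i₀.isLt; omega
      have hF'0 : Sum.inr (Sum.inr (Sum.inl (⟨0, hb1⟩ : Fin (b-1)))) ∈ I := by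
        refine hcl _ hi₀ _ ?_
        refine Relation.ReflTransGen.head (b := Sum.inr (Sum.inl (⟨a-3, by omega⟩ : Fin (a-2)))) ?_ ?_
        · show piCover a b _ _
          simp only [piCover, Fin.val_mk, true_and, and_true]
          omega
        · exact le_E' i₀ ⟨a-3, by omega⟩ (by simp only [Fin.val_mk]; have := i₀.isLt; omega)
      have := (hF'm ⟨0, hb1⟩).mp hF'0
      omega
    refine ⟨⟨sE, by omega⟩, ⟨tF, by omega⟩, ?_⟩
    ext p
    rcases p with i₀ | i₀ | j₀ | j₀ <;>
      simp only [IP, Finset.mem_filter, Finset.mem_univ, true_and] <;>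
      simp only [IP, predP, Finset.mem_filter, Finset.mem_univ, true_and,
        decide_eq_true_eq, Fin.val_mk, Bool.false_eq_true]
    · rw [hEm i₀]
    · exact iff_of_false (hE'empty i₀) (by simp)
    · exact iff_of_false (fun h => by have := (hF'm j₀).mp h; omega) (by simp)
    · rw [hFm j₀]
  · -- primed part: I = IQ
    right
    have h1t : 1 ≤ tF' := by omega
    have hb1 : 0 < b - 1 := by omega
    have hF'0 : Sum.inr (Sum.inr (Sum.inl (⟨0, hb1⟩ : Fin (b-1)))) ∈ I :=
      (hF'm ⟨0, hb1⟩).mpr (by simp only [Fin.val_mk]; omega)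
    -- E (a-2) ∈ I
    have hEa2 : Sum.inl (⟨a-2, by omega⟩ : Fin (a-1)) ∈ I := by
      refine hcl _ hF'0 _ (Relation.ReflTransGen.single ?_)
      show piCover a b _ _
      simp only [piCover, Fin.val_mk, true_and, and_true]
      omega
    have hsEa2 : sE ≤ a - 2 := by
      have := (hEm _).mp hEa2
      simp only [Fin.val_mk] at this
      omega
    -- tF' ≤ tF
    have hFtF' : Sum.inr (Sum.inr (Sum.inr (⟨tF'-1, by omega⟩ : Fin (b-1)))) ∈ I := by
      refine hcl _ ((hF'm ⟨tF'-1, by omega⟩).mpr (by simp only [Fin.val_mk]; omega)) _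
        (Relation.ReflTransGen.single ?_)
      show piCover a b _ _
      simp only [piCover, Fin.val_mk]
    have htFtF' : tF' ≤ tF := by
      have := (hFm _).mp hFtF'
      simp only [Fin.val_mk] at this
      omega
    -- sE ≤ sE'
    have hsEsE' : sE ≤ sE' := by
      by_cases hE'ne : sE' < a - 2
      · have ha3 : 3 ≤ a := by omega
        have hmem : Sum.inr (Sum.inl (⟨sE', by omega⟩ : Fin (a-2))) ∈ I :=
          (hE'm _).mpr (by simp only [Fin.val_mk]; omega)
        have hEmem : Sum.inl (⟨sE', by omega⟩ : Fin (a-1)) ∈ I := by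
          refine hcl _ hmem _ (Relation.ReflTransGen.single ?_)
          show piCover a b _ _
          simp only [piCover, Fin.val_mk]
        have := (hEm _).mp hEmem
        simp only [Fin.val_mk] at this
        omega
      · omega
    refine ⟨⟨sE, by omega⟩, ⟨sE'+1, by omega⟩, ⟨tF'-1, by omega⟩, ⟨tF, by omega⟩,
      by simp only [Fin.mk_lt_mk]; omega, by simp only [Fin.mk_lt_mk]; omega, ?_⟩
    ext p
    rcases p with i₀ | i₀ | j₀ | j₀ <;>
      simp only [IQ, Finset.mem_filter, Finset.mem_univ, true_and] <;>
      simp only [IQ, predQ, Finset.mem_filter, Finset.mem_univ, true_and,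
        decide_eq_true_eq, Fin.val_mk]
    · rw [hEm i₀]
    · rw [hE'm i₀]; omega
    · rw [hF'm j₀]; omega
    · rw [hFm j₀]

end HibiProof
namespace HibiProof
open AddMonoidAlgebra
variable {k : Type*} [Field k] {a b : ℕ}

/-- additive extension of a map to a `ℤ`-module -/
noncomputable def liftN {α M : Type*} [AddCommMonoid M] (g : α → M) : (α →₀ ℕ) →+ M :=
  Finsupp.liftAddHom (fun v => (multiplesHom M) (g v))

lemma liftN_single {α M : Type*} [AddCommMonoid M] (g : α → M) (v : α) (n : ℕ) :
    liftN g (Finsupp.single v n) = n • g v := by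
  simp [liftN, Finsupp.liftAddHom_apply_single, multiplesHom]

noncomputable def liftZ {α M : Type*} [AddCommGroup M] (g : α → M) : (α →₀ ℤ) →+ M :=
  Finsupp.liftAddHom (fun v => (zmultiplesHom M) (g v))

lemma liftZ_single {α M : Type*} [AddCommGroup M] (g : α → M) (v : α) (n : ℤ) :
    liftZ g (Finsupp.single v n) = n • g v := by
  simp [liftZ, Finsupp.liftAddHom_apply_single, zmultiplesHom]

/-- `aeval` at families of monomials with exponents given additively is `mapDomain`. -/
lemma aeval_eq_mapDomain {σ G : Type*} [AddCommMonoid G] (f : (σ →₀ ℕ) →+ G)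
    (p : MvPolynomial σ k) :
    MvPolynomial.aeval
      (fun s => (AddMonoidAlgebra.single (f (Finsupp.single s 1)) 1 : AddMonoidAlgebra k G)) p
      = AddMonoidAlgebra.mapDomain f p := by
  induction p using MvPolynomial.induction_on' with
  | add p q hp hq =>
      rw [map_add, hp, hq]
      exact (AddMonoidAlgebra.mapDomain_add _ _ _).symm
  | monomial m c =>
      rw [MvPolynomial.aeval_monomial, ← MvPolynomial.single_eq_monomial,
        AddMonoidAlgebra.mapDomain_single]
      have h1 : ∀ s : σ,
          (AddMonoidAlgebra.single (f (Finsupp.single s 1)) 1 : AddMonoidAlgebra k G) ^ m s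
          = AddMonoidAlgebra.single (m s • f (Finsupp.single s 1)) 1 := by
        intro s; rw [AddMonoidAlgebra.single_pow, one_pow]
      rw [Finsupp.prod, Finset.prod_congr rfl (fun s _ => h1 s), AddMonoidAlgebra.prod_single,
        Finset.prod_const_one]
      have h2 : ∑ s ∈ m.support, m s • f (Finsupp.single s 1) = f m := by
        conv_rhs => rw [← Finsupp.sum_single m]
        rw [Finsupp.sum, map_sum]
        refine Finset.sum_congr rfl (fun s _ => ?_)
        rw [← map_nsmul]
        congr 1
        rw [Finsupp.smul_single, smul_eq_mul, mul_one]
      rw [h2, AddMonoidAlgebra.coe_algebraMap]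
      show AddMonoidAlgebra.single 0 ((algebraMap k k) c) * _ = _
      rw [AddMonoidAlgebra.single_mul_single, zero_add, mul_one]
      simp

end HibiProof
namespace HibiProof
variable {a b : ℕ}

noncomputable def eE (a b m : ℕ) : Option (PiElt a b) →₀ ℤ :=
  if h : m < a-1 then Finsupp.single (Option.some (Sum.inl ⟨m,h⟩)) 1 else 0
noncomputable def eE' (a b m : ℕ) : Option (PiElt a b) →₀ ℤ :=
  if h : m < a-2 then Finsupp.single (Option.some (Sum.inr (Sum.inl ⟨m,h⟩))) 1 else 0
noncomputable def eF' (a b m : ℕ) : Option (PiElt a b) →₀ ℤ :=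
  if h : m < b-1 then Finsupp.single (Option.some (Sum.inr (Sum.inr (Sum.inl ⟨m,h⟩)))) 1 else 0
noncomputable def eF (a b m : ℕ) : Option (PiElt a b) →₀ ℤ :=
  if h : m < b-1 then Finsupp.single (Option.some (Sum.inr (Sum.inr (Sum.inr ⟨m,h⟩)))) 1 else 0

noncomputable def rr (a b : ℕ) : SVar a b → (Option (PiElt a b) →₀ ℤ)
  | Sum.inl m => (∑ i ∈ Finset.Ico (m:ℕ) (a-1), eE a b i) + Finsupp.single Option.none 1
  | Sum.inr (Sum.inl m) => ∑ j ∈ Finset.Ico 1 ((m:ℕ)+1), eF' a b j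
  | Sum.inr (Sum.inr (Sum.inl m)) =>
      if (m:ℕ) = 0 then 0 else (∑ i ∈ Finset.Ico ((m:ℕ)-1) (a-2), eE' a b i) + eF' a b 0
  | Sum.inr (Sum.inr (Sum.inr m)) => ∑ j ∈ Finset.Ico 0 (m:ℕ), eF a b j

-- liftZ of the totalized singles
lemma liftZ_gx (m : ℕ) (h : m < a) :
    liftZ (rr a b) (gx a b m) = rr a b (Sum.inl ⟨m, h⟩) := by
  rw [gx, dif_pos h, liftZ_single, one_smul]; rfl
lemma liftZ_gx' (m : ℕ) (h : m < b) :
    liftZ (rr a b) (gx' a b m) = rr a b (Sum.inr (Sum.inl ⟨m, h⟩)) := by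
  rw [gx', dif_pos h, liftZ_single, one_smul]; rfl
lemma liftZ_gy' (m : ℕ) (h : m < a) :
    liftZ (rr a b) (gy' a b m) = rr a b (Sum.inr (Sum.inr (Sum.inl ⟨m, h⟩))) := by
  rw [gy', dif_pos h, liftZ_single, one_smul]; rfl
lemma liftZ_gy (m : ℕ) (h : m < b) :
    liftZ (rr a b) (gy a b m) = rr a b (Sum.inr (Sum.inr (Sum.inr ⟨m, h⟩))) := by
  rw [gy, dif_pos h, liftZ_single, one_smul]; rfl

lemma rL_single (ha : 2 ≤ a) (hb : 2 ≤ b) (v : Option (PiElt a b)) :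
    liftZ (rr a b) (L a b v) = Finsupp.single v 1 := by
  match v with
  | Option.none =>
      rw [show L a b Option.none = gx a b (a-1) + gy a b 0 from rfl, map_add,
        liftZ_gx (a-1) (by omega), liftZ_gy 0 (by omega)]
      show (∑ i ∈ Finset.Ico (a-1) (a-1), eE a b i) + Finsupp.single Option.none 1
          + (∑ j ∈ Finset.Ico 0 0, eF a b j) = _
      simp
  | Option.some (Sum.inl i) =>
      rw [show L a b (Option.some (Sum.inl i)) = gx a b i - gx a b (i+1) from rfl, map_sub,
        liftZ_gx (i:ℕ) (by omega : (i:ℕ) < a), liftZ_gx ((i:ℕ)+1) (by have := i.isLt; omega)]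
      show (∑ m ∈ Finset.Ico (i:ℕ) (a-1), eE a b m) + Finsupp.single Option.none 1
          - ((∑ m ∈ Finset.Ico ((i:ℕ)+1) (a-1), eE a b m) + Finsupp.single Option.none 1) = _
      rw [Finset.sum_eq_sum_Ico_succ_bot (by have := i.isLt; omega : (i:ℕ) < a-1)]
      rw [eE, dif_pos i.isLt]
      simp
  | Option.some (Sum.inr (Sum.inl i)) =>
      rw [show L a b (Option.some (Sum.inr (Sum.inl i)))
          = gy' a b ((i:ℕ)+1) - gy' a b ((i:ℕ)+2) from rfl, map_sub,
        liftZ_gy' ((i:ℕ)+1) (by have := i.isLt; omega),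
        liftZ_gy' ((i:ℕ)+2) (by have := i.isLt; omega)]
      show (if ((i:ℕ)+1 : ℕ) = 0 then 0
            else (∑ m ∈ Finset.Ico ((i:ℕ)+1-1) (a-2), eE' a b m) + eF' a b 0)
          - (if ((i:ℕ)+2 : ℕ) = 0 then 0
            else (∑ m ∈ Finset.Ico ((i:ℕ)+2-1) (a-2), eE' a b m) + eF' a b 0) = _
      rw [if_neg (by omega), if_neg (by omega)]
      have e1 : (i:ℕ)+1-1 = (i:ℕ) := by omega
      have e2 : (i:ℕ)+2-1 = (i:ℕ)+1 := by omega
      rw [e1, e2, Finset.sum_eq_sum_Ico_succ_bot (by have := i.isLt; omega : (i:ℕ) < a-2)]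
      rw [eE', dif_pos i.isLt]
      simp
  | Option.some (Sum.inr (Sum.inr (Sum.inl j))) =>
      by_cases hj : (j:ℕ) = 0
      · rw [show L a b (Option.some (Sum.inr (Sum.inr (Sum.inl j))))
            = if (j:ℕ) = 0 then gx' a b 0 + gy' a b (a-1) else gx' a b (j:ℕ) - gx' a b ((j:ℕ)-1)
            from rfl, if_pos hj, map_add, liftZ_gx' 0 (by omega), liftZ_gy' (a-1) (by omega)]
        show (∑ m ∈ Finset.Ico 1 (0+1), eF' a b m)
            + (if (a-1 : ℕ) = 0 then 0
               else (∑ m ∈ Finset.Ico (a-1-1) (a-2), eE' a b m) + eF' a b 0) = _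
        rw [if_neg (by omega)]
        have e1 : a-1-1 = a-2 := by omega
        rw [e1]
        simp only [Finset.Ico_self, Finset.sum_empty, zero_add, add_zero]
        rw [eF', dif_pos (by omega : (0:ℕ) < b-1)]
        have hj' : j = ⟨0, by omega⟩ := Fin.ext (by simpa using hj)
        exact congrArg (fun t : Fin (b-1) =>
          Finsupp.single (Option.some (Sum.inr (Sum.inr (Sum.inl t))) : Option (PiElt a b)) (1:ℤ))
          hj'.symm
      · rw [show L a b (Option.some (Sum.inr (Sum.inr (Sum.inl j))))
            = if (j:ℕ) = 0 then gx' a b 0 + gy' a b (a-1) else gx' a b (j:ℕ) - gx' a b ((j:ℕ)-1)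
            from rfl, if_neg hj, map_sub,
          liftZ_gx' (j:ℕ) (by have := j.isLt; omega), liftZ_gx' ((j:ℕ)-1) (by have := j.isLt; omega)]
        show (∑ m ∈ Finset.Ico 1 ((j:ℕ)+1), eF' a b m)
            - (∑ m ∈ Finset.Ico 1 ((j:ℕ)-1+1), eF' a b m) = _
        have e1 : (j:ℕ)-1+1 = (j:ℕ) := by omega
        rw [e1, Finset.sum_Ico_succ_top (by omega : 1 ≤ (j:ℕ))]
        rw [eF', dif_pos j.isLt]
        simp
  | Option.some (Sum.inr (Sum.inr (Sum.inr j))) =>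
      rw [show L a b (Option.some (Sum.inr (Sum.inr (Sum.inr j))))
          = gy a b ((j:ℕ)+1) - gy a b (j:ℕ) from rfl, map_sub,
        liftZ_gy ((j:ℕ)+1) (by have := j.isLt; omega), liftZ_gy (j:ℕ) (by have := j.isLt; omega)]
      show (∑ m ∈ Finset.Ico 0 ((j:ℕ)+1), eF a b m)
          - (∑ m ∈ Finset.Ico 0 (j:ℕ), eF a b m) = _
      rw [Finset.sum_Ico_succ_top (Nat.zero_le (j:ℕ))]
      rw [eF, dif_pos j.isLt]
      simp

end HibiProof
namespace HibiProof
open AddMonoidAlgebra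
variable {k : Type*} [Field k] {a b : ℕ}

noncomputable def cNZ (α : Type*) : (α →₀ ℕ) →+ (α →₀ ℤ) :=
  liftN (fun v => Finsupp.single v 1)

lemma cNZ_single {α : Type*} (v : α) (n : ℕ) :
    cNZ α (Finsupp.single v n) = Finsupp.single v (n : ℤ) := by
  rw [cNZ, liftN_single]
  simp

lemma cNZ_injective (α : Type*) : Function.Injective (cNZ α) := by
  have h : ⇑(cNZ α) = Finsupp.mapRange (fun n : ℕ => (n:ℤ)) rfl := by
    have := Finsupp.addHom_ext (α := α) (M := ℕ) (N := (α →₀ ℤ))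
      (f := cNZ α) (g := Finsupp.mapRange.addMonoidHom (Nat.castAddMonoidHom ℤ))
      (fun v n => by rw [cNZ_single, Finsupp.mapRange.addMonoidHom_apply, Finsupp.mapRange_single]; rfl)
    rw [this]
    rfl
  rw [h]
  exact Finsupp.mapRange_injective _ _ Nat.cast_injective

lemma rL_comp (ha : 2 ≤ a) (hb : 2 ≤ b) (m : Option (PiElt a b) →₀ ℕ) :
    liftZ (rr a b) (liftN (L a b) m) = cNZ _ m := by
  have h : (liftZ (rr a b)).comp (liftN (L a b)) = cNZ (Option (PiElt a b)) := by
    apply Finsupp.addHom_ext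
    intro v n
    rw [AddMonoidHom.comp_apply, liftN_single, map_nsmul, rL_single ha hb, cNZ_single]
    simp
  calc liftZ (rr a b) (liftN (L a b) m) = ((liftZ (rr a b)).comp (liftN (L a b))) m := rfl
    _ = cNZ _ m := by rw [h]

lemma fL_injective (ha : 2 ≤ a) (hb : 2 ≤ b) : Function.Injective (liftN (L a b)) := by
  intro m₁ m₂ h
  apply cNZ_injective (Option (PiElt a b))
  rw [← rL_comp ha hb, ← rL_comp ha hb, h]

-- the two algebra embeddings
noncomputable def phi (k : Type*) [Field k] (a b : ℕ) :
    MvPolynomial (Option (PiElt a b)) k →ₐ[k] AddMonoidAlgebra k (Vec a b) :=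
  MvPolynomial.aeval (fun v => AddMonoidAlgebra.single (L a b v) 1)

noncomputable def iota (k : Type*) [Field k] (a b : ℕ) :
    MvPolynomial (SVar a b) k →ₐ[k] AddMonoidAlgebra k (Vec a b) :=
  MvPolynomial.aeval (fun u => AddMonoidAlgebra.single (Finsupp.single u 1) 1)

lemma phi_eq_mapDomain (p : MvPolynomial (Option (PiElt a b)) k) :
    phi k a b p = AddMonoidAlgebra.mapDomain (liftN (L a b)) p := by
  have hf : (fun v => (AddMonoidAlgebra.single (L a b v) 1 : AddMonoidAlgebra k (Vec a b)))
      = (fun s => AddMonoidAlgebra.single ((liftN (L a b)) (Finsupp.single s 1)) 1) :=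
    funext fun v => by rw [liftN_single, one_smul]
  rw [phi, hf, aeval_eq_mapDomain]

lemma iota_eq_mapDomain (p : MvPolynomial (SVar a b) k) :
    iota k a b p = AddMonoidAlgebra.mapDomain (cNZ (SVar a b)) p := by
  have hf : (fun u => (AddMonoidAlgebra.single (Finsupp.single u 1) 1 : AddMonoidAlgebra k (Vec a b)))
      = (fun s => AddMonoidAlgebra.single ((cNZ (SVar a b)) (Finsupp.single s 1)) 1) :=
    funext fun v => by rw [cNZ_single]; rfl
  rw [iota, hf, aeval_eq_mapDomain]

lemma phi_injective (ha : 2 ≤ a) (hb : 2 ≤ b) : Function.Injective (phi k a b) := by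
  intro p q h
  rw [phi_eq_mapDomain, phi_eq_mapDomain] at h
  exact AddMonoidAlgebra.mapDomain_injective (fL_injective ha hb) h

lemma iota_injective : Function.Injective (iota k a b) := by
  intro p q h
  rw [iota_eq_mapDomain, iota_eq_mapDomain] at h
  exact AddMonoidAlgebra.mapDomain_injective (cNZ_injective _) h

lemma phi_gen (I : Finset (PiElt a b)) :
    phi k a b ((∏ p ∈ I, MvPolynomial.X (Option.some p)) * MvPolynomial.X Option.none)
      = AddMonoidAlgebra.single ((∑ p ∈ I, L a b (Option.some p)) + L a b Option.none) 1 := by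
  rw [phi, map_mul, map_prod]
  simp only [MvPolynomial.aeval_X]
  rw [AddMonoidAlgebra.prod_single, AddMonoidAlgebra.single_mul_single]
  simp

lemma iota_gen2 (u₁ u₂ : SVar a b) :
    iota k a b (MvPolynomial.X u₁ * MvPolynomial.X u₂)
      = AddMonoidAlgebra.single (Finsupp.single u₁ 1 + Finsupp.single u₂ 1) 1 := by
  rw [iota, map_mul]
  simp only [MvPolynomial.aeval_X]
  rw [AddMonoidAlgebra.single_mul_single, mul_one]

lemma iota_gen4 (u₁ u₂ u₃ u₄ : SVar a b) :
    iota k a b (MvPolynomial.X u₁ * MvPolynomial.X u₂ * MvPolynomial.X u₃ * MvPolynomial.X u₄)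
      = AddMonoidAlgebra.single (Finsupp.single u₁ 1 + Finsupp.single u₂ 1
          + Finsupp.single u₃ 1 + Finsupp.single u₄ 1) 1 := by
  rw [iota, map_mul, map_mul, map_mul]
  simp only [MvPolynomial.aeval_X]
  rw [AddMonoidAlgebra.single_mul_single, AddMonoidAlgebra.single_mul_single,
    AddMonoidAlgebra.single_mul_single]
  simp

end HibiProof


/-- **Step (I)+(II).** The `k`-subalgebra of `S_{a,b}` generated by the monomials
`x_i y_j` (`1 ≤ i ≤ a`, `1 ≤ j ≤ b`) together with the monomials `x_i x_{j'}' y_{i'}' y_j`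
(`1 ≤ i < i' ≤ a`, `1 ≤ j' < j ≤ b`) is isomorphic as a `k`-algebra to the Hibi ring
`k[Π_{a,b}]`. -/
theorem monomialAlgebra_iso_HibiRing (k : Type*) [Field k] (a b : ℕ) (ha : 2 ≤ a) (hab : a ≤ b) :
    Nonempty
      ((Algebra.adjoin k
        ({p | ∃ (i : Fin a) (j : Fin b),
            p = MvPolynomial.X (xv i) * MvPolynomial.X (yv j)} ∪
         {p | ∃ (i i' : Fin a) (j' j : Fin b), i < i' ∧ j' < j ∧
            p = MvPolynomial.X (xv i) * MvPolynomial.X (x'v j') *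
              MvPolynomial.X (y'v i') * MvPolynomial.X (yv j)} :
          Set (MvPolynomial (SVar a b) k))) ≃ₐ[k] (HibiRing a b k)) := by
  have hb : 2 ≤ b := le_trans ha hab
  set genS : Set (MvPolynomial (SVar a b) k) :=
    ({p | ∃ (i : Fin a) (j : Fin b),
        p = MvPolynomial.X (xv i) * MvPolynomial.X (yv j)} ∪
     {p | ∃ (i i' : Fin a) (j' j : Fin b), i < i' ∧ j' < j ∧
        p = MvPolynomial.X (xv i) * MvPolynomial.X (x'v j') *
          MvPolynomial.X (y'v i') * MvPolynomial.X (yv j)}) with hgenS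
  set genH : Set (MvPolynomial (Option (PiElt a b)) k) :=
    {g | ∃ I : Finset (PiElt a b), IsPosetIdeal a b (I : Set (PiElt a b)) ∧
      g = (∏ p ∈ I, MvPolynomial.X (some p)) * MvPolynomial.X none} with hgenH
  have himg : HibiProof.phi k a b '' genH = HibiProof.iota k a b '' genS := by
    ext g
    constructor
    · rintro ⟨_, ⟨I, hI, rfl⟩, rfl⟩
      rw [HibiProof.phi_gen]
      rcases HibiProof.classify ha hb I hI with ⟨i, j, rfl⟩ | ⟨i, i', j', j, hii', hj'j, rfl⟩
      · refine ⟨MvPolynomial.X (xv i) * MvPolynomial.X (yv j), Or.inl ⟨i, j, rfl⟩, ?_⟩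
        rw [HibiProof.iota_gen2, HibiProof.sum_IP ha hb]
      · refine ⟨MvPolynomial.X (xv i) * MvPolynomial.X (x'v j') *
            MvPolynomial.X (y'v i') * MvPolynomial.X (yv j),
            Or.inr ⟨i, i', j', j, hii', hj'j, rfl⟩, ?_⟩
        rw [HibiProof.iota_gen4, HibiProof.sum_IQ ha hb i i' j' j hii' hj'j]
    · rintro ⟨q, hq | hq, rfl⟩
      · obtain ⟨i, j, rfl⟩ := hq
        refine ⟨(∏ p ∈ HibiProof.IP i j, MvPolynomial.X (Option.some p)) *
            MvPolynomial.X Option.none,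
            ⟨HibiProof.IP i j, HibiProof.isPosetIdeal_IP i j, rfl⟩, ?_⟩
        rw [HibiProof.phi_gen, HibiProof.iota_gen2, HibiProof.sum_IP ha hb]
      · obtain ⟨i, i', j', j, hii', hj'j, rfl⟩ := hq
        refine ⟨(∏ p ∈ HibiProof.IQ i i' j' j, MvPolynomial.X (Option.some p)) *
            MvPolynomial.X Option.none,
            ⟨HibiProof.IQ i i' j' j, HibiProof.isPosetIdeal_IQ i i' j' j hii' hj'j, rfl⟩, ?_⟩
        rw [HibiProof.phi_gen, HibiProof.iota_gen4,
          HibiProof.sum_IQ ha hb i i' j' j hii' hj'j]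
  have h1 : (Algebra.adjoin k genS).map (HibiProof.iota k a b)
      = (HibiRing a b k).map (HibiProof.phi k a b) := by
    rw [HibiRing, AlgHom.map_adjoin, AlgHom.map_adjoin, himg]
  exact ⟨(Subalgebra.equivMapOfInjective _ (HibiProof.iota k a b)
      HibiProof.iota_injective).trans
    ((Subalgebra.equivOfEq _ _ h1).trans
      (Subalgebra.equivMapOfInjective _ (HibiProof.phi k a b)
        (HibiProof.phi_injective ha hb)).symm)⟩
end

section
/- Let 2 ≤ a ≤ b. The poset ideals (down-closed subsets) of Π_{a,b} are precisely the following, where ⟨p_1,…,p_r⟩ denotes the poset ideal {q ∈ Π_{a,b} : q ⪯ p_s for some s}: the empty set; ⟨e_i⟩ for 1 ≤ i ≤ a−1; ⟨f_j⟩ for 2 ≤ j ≤ b; ⟨e_i, f_j⟩ for 1 ≤ i ≤ a−1 and 2 ≤ j ≤ b; ⟨e_i, e_{i'}'⟩ for 1 ≤ i < i' ≤ a−1; ⟨e_i, e_{i'}', f_j⟩ for 1 ≤ i < i' ≤ a−1 and 3 ≤ j ≤ b; ⟨f_{j'}', f_j⟩ for 1 ≤ j' < j ≤ b; ⟨e_i,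 f_{j'}', f_j⟩ for 1 ≤ i ≤ a−2 and 1 ≤ j' < j ≤ b; and ⟨e_i, e_{i'}', f_{j'}', f_j⟩ for 1 ≤ i < i' ≤ a−1 and 2 ≤ j' < j ≤ b; and all of these poset ideals are pairwise distinct. -/
/-- The element `e_i` (`1 ≤ i ≤ a−1`). -/
def eP (a b : ℕ) (i : ℕ) (h : i - 1 < a - 1) : PiElt a b := Sum.inl ⟨i - 1, h⟩
/-- The element `e_{i'}'` (`2 ≤ i' ≤ a−1`). -/
def e'P (a b : ℕ) (i' : ℕ) (h : i' - 2 < a - 2) : PiElt a b := Sum.inr (Sum.inl ⟨i' - 2, h⟩)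
/-- The element `f_{j'}'` (`1 ≤ j' ≤ b−1`). -/
def f'P (a b : ℕ) (j' : ℕ) (h : j' - 1 < b - 1) : PiElt a b :=
  Sum.inr (Sum.inr (Sum.inl ⟨j' - 1, h⟩))
/-- The element `f_j` (`2 ≤ j ≤ b`). -/
def fP (a b : ℕ) (j : ℕ) (h : j - 2 < b - 1) : PiElt a b :=
  Sum.inr (Sum.inr (Sum.inr ⟨j - 2, h⟩))

/-- The index set parametrizing the claimed list of poset ideals of `Π_{a,b}`. -/
inductive IdealIdx (a b : ℕ) : Type
  /-- the empty poset ideal -/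
  | empty : IdealIdx a b
  /-- `⟨e_i⟩` for `1 ≤ i ≤ a−1` -/
  | E (i : ℕ) (h1 : 1 ≤ i) (h2 : i ≤ a - 1) : IdealIdx a b
  /-- `⟨f_j⟩` for `2 ≤ j ≤ b` -/
  | F (j : ℕ) (h1 : 2 ≤ j) (h2 : j ≤ b) : IdealIdx a b
  /-- `⟨e_i, f_j⟩` for `1 ≤ i ≤ a−1`, `2 ≤ j ≤ b` -/
  | EF (i j : ℕ) (h1 : 1 ≤ i) (h2 : i ≤ a - 1) (h3 : 2 ≤ j) (h4 : j ≤ b) : IdealIdx a b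
  /-- `⟨e_i, e_{i'}'⟩` for `1 ≤ i < i' ≤ a−1` -/
  | EE (i i' : ℕ) (h1 : 1 ≤ i) (h2 : i < i') (h3 : i' ≤ a - 1) : IdealIdx a b
  /-- `⟨e_i, e_{i'}', f_j⟩` for `1 ≤ i < i' ≤ a−1`, `3 ≤ j ≤ b` -/
  | EEF (i i' j : ℕ) (h1 : 1 ≤ i) (h2 : i < i') (h3 : i' ≤ a - 1)
      (h4 : 3 ≤ j) (h5 : j ≤ b) : IdealIdx a b
  /-- `⟨f_{j'}', f_j⟩` for `1 ≤ j' < j ≤ b` -/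
  | FF (j' j : ℕ) (h1 : 1 ≤ j') (h2 : j' < j) (h3 : j ≤ b) : IdealIdx a b
  /-- `⟨e_i, f_{j'}', f_j⟩` for `1 ≤ i ≤ a−2`, `1 ≤ j' < j ≤ b` -/
  | EFF (i j' j : ℕ) (h1 : 1 ≤ i) (h2 : i ≤ a - 2)
      (h3 : 1 ≤ j') (h4 : j' < j) (h5 : j ≤ b) : IdealIdx a b
  /-- `⟨e_i, e_{i'}', f_{j'}', f_j⟩` for `1 ≤ i < i' ≤ a−1`, `2 ≤ j' < j ≤ b` -/
  | EEFF (i i' j' j : ℕ) (h1 : 1 ≤ i) (h2 : i < i') (h3 : i' ≤ a - 1)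
      (h4 : 2 ≤ j') (h5 : j' < j) (h6 : j ≤ b) : IdealIdx a b

/-- The poset ideal `⟨p_1,…,p_r⟩ = {q : q ⪯ p_s for some s}` attached to each index. -/
def idealOf (a b : ℕ) (ha : 2 ≤ a) (hab : a ≤ b) : IdealIdx a b → Set (PiElt a b)
  | .empty => ∅
  | .E i h1 h2 => {q | piLe a b q (eP a b i (by omega))}
  | .F j h1 h2 => {q | piLe a b q (fP a b j (by omega))}
  | .EF i j h1 h2 h3 h4 =>
      {q | piLe a b q (eP a b i (by omega)) ∨ piLe a b q (fP a b j (by omega))}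
  | .EE i i' h1 h2 h3 =>
      {q | piLe a b q (eP a b i (by omega)) ∨ piLe a b q (e'P a b i' (by omega))}
  | .EEF i i' j h1 h2 h3 h4 h5 =>
      {q | piLe a b q (eP a b i (by omega)) ∨ piLe a b q (e'P a b i' (by omega)) ∨
        piLe a b q (fP a b j (by omega))}
  | .FF j' j h1 h2 h3 =>
      {q | piLe a b q (f'P a b j' (by omega)) ∨ piLe a b q (fP a b j (by omega))}
  | .EFF i j' j h1 h2 h3 h4 h5 =>
      {q | piLe a b q (eP a b i (by omega)) ∨ piLe a b q (f'P a b j' (by omega)) ∨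
        piLe a b q (fP a b j (by omega))}
  | .EEFF i i' j' j h1 h2 h3 h4 h5 h6 =>
      {q | piLe a b q (eP a b i (by omega)) ∨ piLe a b q (e'P a b i' (by omega)) ∨
        piLe a b q (f'P a b j' (by omega)) ∨ piLe a b q (fP a b j (by omega))}


namespace PiClassify

open Sum

/-- Closed-form description of the order relation of `Π_{a,b}`. -/
def piR (a b : ℕ) : PiElt a b → PiElt a b → Prop
  | Sum.inl k, Sum.inl i => (i : ℕ) ≤ (k : ℕ)
  | Sum.inl k, Sum.inr (Sum.inl i) => (i : ℕ) ≤ (k : ℕ)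
  | Sum.inl k, Sum.inr (Sum.inr (Sum.inl _)) => (k : ℕ) + 2 = a
  | Sum.inr (Sum.inl k), Sum.inr (Sum.inl i) => (i : ℕ) ≤ (k : ℕ)
  | Sum.inr (Sum.inr (Sum.inl k)), Sum.inr (Sum.inl _) => (k : ℕ) = 0
  | Sum.inr (Sum.inr (Sum.inr k)), Sum.inr (Sum.inl _) => (k : ℕ) = 0
  | Sum.inr (Sum.inr (Sum.inl k)), Sum.inr (Sum.inr (Sum.inl j)) => (k : ℕ) ≤ (j : ℕ)
  | Sum.inr (Sum.inr (Sum.inr k)), Sum.inr (Sum.inr (Sum.inl j)) => (k : ℕ) ≤ (j : ℕ)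
  | Sum.inr (Sum.inr (Sum.inr k)), Sum.inr (Sum.inr (Sum.inr j)) => (k : ℕ) ≤ (j : ℕ)
  | _, _ => False

lemma piR_refl (a b : ℕ) (x : PiElt a b) : piR a b x x := by
  rcases x with k | k | k | k <;> simp [piR]

lemma piR_step (a b : ℕ) {x z y : PiElt a b} (h1 : piR a b x z) (h2 : piCover a b z y) :
    piR a b x y := by
  rcases x with ⟨k, hk⟩ | ⟨k, hk⟩ | ⟨k, hk⟩ | ⟨k, hk⟩ <;>
    rcases z with ⟨l, hl⟩ | ⟨l, hl⟩ | ⟨l, hl⟩ | ⟨l, hl⟩ <;>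
    rcases y with ⟨m, hm⟩ | ⟨m, hm⟩ | ⟨m, hm⟩ | ⟨m, hm⟩ <;>
    simp_all [piR, piCover] <;> omega

lemma chainE (a b : ℕ) (n : ℕ) : ∀ (k i : Fin (a - 1)), (k : ℕ) = (i : ℕ) + n →
    piLe a b (Sum.inl k) (Sum.inl i) := by
  induction n with
  | zero => intro k i h; have : k = i := Fin.ext (by omega); rw [this]; exact Relation.ReflTransGen.refl
  | succ n ih =>
      intro k i h
      refine Relation.ReflTransGen.head (b := Sum.inl ⟨(i : ℕ) + n, by omega⟩) ?_ (ih _ _ rfl)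
      show piCover a b _ _
      simp only [piCover, Fin.val_mk, and_true, true_and, h]; omega

lemma chainE' (a b : ℕ) (n : ℕ) : ∀ (k i : Fin (a - 2)), (k : ℕ) = (i : ℕ) + n →
    piLe a b (Sum.inr (Sum.inl k)) (Sum.inr (Sum.inl i)) := by
  induction n with
  | zero => intro k i h; have : k = i := Fin.ext (by omega); rw [this]; exact Relation.ReflTransGen.refl
  | succ n ih =>
      intro k i h
      refine Relation.ReflTransGen.head (b := Sum.inr (Sum.inl ⟨(i : ℕ) + n, by omega⟩)) ?_
        (ih _ _ rfl)
      show piCover a b _ _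
      simp only [piCover, Fin.val_mk, and_true, true_and, h]; omega

lemma chainF' (a b : ℕ) (n : ℕ) : ∀ (k j : Fin (b - 1)), (j : ℕ) = (k : ℕ) + n →
    piLe a b (Sum.inr (Sum.inr (Sum.inl k))) (Sum.inr (Sum.inr (Sum.inl j))) := by
  induction n with
  | zero => intro k j h; have : j = k := Fin.ext (by omega); rw [this]; exact Relation.ReflTransGen.refl
  | succ n ih =>
      intro k j h
      refine Relation.ReflTransGen.tail (b := Sum.inr (Sum.inr (Sum.inl ⟨(k : ℕ) + n, by omega⟩)))
        (ih _ _ rfl) ?_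
      show piCover a b _ _
      simp only [piCover, Fin.val_mk, and_true, true_and, h]; omega

lemma chainF (a b : ℕ) (n : ℕ) : ∀ (k j : Fin (b - 1)), (j : ℕ) = (k : ℕ) + n →
    piLe a b (Sum.inr (Sum.inr (Sum.inr k))) (Sum.inr (Sum.inr (Sum.inr j))) := by
  induction n with
  | zero => intro k j h; have : j = k := Fin.ext (by omega); rw [this]; exact Relation.ReflTransGen.refl
  | succ n ih =>
      intro k j h
      refine Relation.ReflTransGen.tail (b := Sum.inr (Sum.inr (Sum.inr ⟨(k : ℕ) + n, by omega⟩)))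
        (ih _ _ rfl) ?_
      show piCover a b _ _
      simp only [piCover, Fin.val_mk, and_true, true_and, h]; omega

lemma piLe_iff (a b : ℕ) (ha : 2 ≤ a) (hab : a ≤ b) (x y : PiElt a b) :
    piLe a b x y ↔ piR a b x y := by
  constructor
  · intro h
    induction h with
    | refl => exact piR_refl a b x
    | tail _ hc ih => exact piR_step a b ih hc
  · intro h
    have hb1 : 1 ≤ b - 1 := by omega
    rcases x with k | k | k | k <;> rcases y with i | i | i | i <;>
      simp only [piR] at h <;>
      [skip; skip; skip; skip; skip; skip; skip; skip; skip]
    -- E ≤ E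
    · exact chainE a b ((k : ℕ) - i) k i (by omega)
    -- E ≤ E'
    · have hi := i.isLt
      refine Relation.ReflTransGen.tail
        (chainE a b ((k : ℕ) - i) k ⟨(i : ℕ), by omega⟩ (by simp only [Fin.val_mk]; omega)) ?_
      show piCover a b _ _; simp [piCover]
    -- E ≤ F'  (k + 2 = a)
    · have h0 : piLe a b (Sum.inl k)
          (Sum.inr (Sum.inr (Sum.inl (⟨0, by omega⟩ : Fin (b - 1))))) := by
        refine Relation.ReflTransGen.single ?_
        show piCover a b _ _; simp only [piCover, Fin.val_mk, and_true, true_and]; omega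
      exact h0.trans (chainF' a b (i : ℕ) _ i (by simp only [Fin.val_mk]; omega))
    -- E' ≤ E'
    · exact chainE' a b ((k : ℕ) - i) k i (by omega)
    -- F' ≤ E'  (k = 0)
    · have hi := i.isLt
      have h1 : piLe a b (Sum.inr (Sum.inr (Sum.inl k)))
          (Sum.inr (Sum.inl ⟨a - 3, by omega⟩)) := by
        refine Relation.ReflTransGen.single ?_
        show piCover a b _ _; simp only [piCover, Fin.val_mk, and_true, true_and]; omega
      exact h1.trans (chainE' a b (a - 3 - i) ⟨a - 3, by omega⟩ i
        (by simp only [Fin.val_mk]; omega))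
    -- F' ≤ F'
    · exact chainF' a b ((i : ℕ) - k) k i (by omega)
    -- F ≤ E'  (k = 0)
    · have hi := i.isLt
      have h0 : piLe a b (Sum.inr (Sum.inr (Sum.inr k)))
          (Sum.inr (Sum.inr (Sum.inl ⟨0, by omega⟩))) := by
        refine Relation.ReflTransGen.single ?_
        show piCover a b _ _; simp only [piCover, Fin.val_mk, and_true, true_and]; omega
      have h1 : piLe a b (Sum.inr (Sum.inr (Sum.inl ⟨0, by omega⟩)) : PiElt a b)
          (Sum.inr (Sum.inl ⟨a - 3, by omega⟩)) := by
        refine Relation.ReflTransGen.single ?_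
        show piCover a b _ _; simp only [piCover, Fin.val_mk, and_true, true_and]; omega
      exact (h0.trans h1).trans (chainE' a b (a - 3 - i) ⟨a - 3, by omega⟩ i
        (by simp only [Fin.val_mk]; omega))
    -- F ≤ F'
    · have hi := i.isLt
      have hk := k.isLt
      have h0 : piLe a b (Sum.inr (Sum.inr (Sum.inr k)))
          (Sum.inr (Sum.inr (Sum.inl (⟨(k : ℕ), by omega⟩ : Fin (b - 1))))) := by
        refine Relation.ReflTransGen.single ?_
        show piCover a b _ _; simp only [piCover, Fin.val_mk]
      exact h0.trans (chainF' a b ((i : ℕ) - k) _ i (by simp only [Fin.val_mk]; omega))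
    -- F ≤ F
    · exact chainF a b ((i : ℕ) - k) k i (by omega)

/-- Canonical form of an ideal from four thresholds. -/
def canon (a b : ℕ) (t : ℕ × ℕ × ℕ × ℕ) : Set (PiElt a b) := fun q =>
  match q with
  | Sum.inl k => t.1 ≤ (k : ℕ)
  | Sum.inr (Sum.inl k) => t.2.1 ≤ (k : ℕ)
  | Sum.inr (Sum.inr (Sum.inl k)) => (k : ℕ) < t.2.2.1
  | Sum.inr (Sum.inr (Sum.inr k)) => (k : ℕ) < t.2.2.2


@[simp] lemma mem_canon_E {a b : ℕ} (t : ℕ × ℕ × ℕ × ℕ) (k : Fin (a - 1)) :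
    (Sum.inl k ∈ canon a b t) ↔ t.1 ≤ (k : ℕ) := Iff.rfl
@[simp] lemma mem_canon_E' {a b : ℕ} (t : ℕ × ℕ × ℕ × ℕ) (k : Fin (a - 2)) :
    (Sum.inr (Sum.inl k) ∈ canon a b t) ↔ t.2.1 ≤ (k : ℕ) := Iff.rfl
@[simp] lemma mem_canon_F' {a b : ℕ} (t : ℕ × ℕ × ℕ × ℕ) (k : Fin (b - 1)) :
    (Sum.inr (Sum.inr (Sum.inl k)) ∈ canon a b t) ↔ (k : ℕ) < t.2.2.1 := Iff.rfl
@[simp] lemma mem_canon_F {a b : ℕ} (t : ℕ × ℕ × ℕ × ℕ) (k : Fin (b - 1)) :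
    (Sum.inr (Sum.inr (Sum.inr k)) ∈ canon a b t) ↔ (k : ℕ) < t.2.2.2 := Iff.rfl

/-- The threshold tuple attached to each index. -/
def tup (a b : ℕ) : IdealIdx a b → ℕ × ℕ × ℕ × ℕ
  | .empty => (a - 1, a - 2, 0, 0)
  | .E i _ _ => (i - 1, a - 2, 0, 0)
  | .F j _ _ => (a - 1, a - 2, 0, j - 1)
  | .EF i j _ _ _ _ => (i - 1, a - 2, 0, j - 1)
  | .EE i i' _ _ _ => (i - 1, i' - 2, 1, 1)
  | .EEF i i' j _ _ _ _ _ => (i - 1, i' - 2, 1, j - 1)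
  | .FF j' j _ _ _ => (a - 2, a - 2, j', j - 1)
  | .EFF i j' j _ _ _ _ _ => (i - 1, a - 2, j', j - 1)
  | .EEFF i i' j' j _ _ _ _ _ _ => (i - 1, i' - 2, j', j - 1)

lemma idealOf_eq_canon (a b : ℕ) (ha : 2 ≤ a) (hab : a ≤ b) (c : IdealIdx a b) :
    idealOf a b ha hab c = canon a b (tup a b c) := by
  cases c <;>
  · ext q
    rcases q with ⟨k, hk⟩ | ⟨k, hk⟩ | ⟨k, hk⟩ | ⟨k, hk⟩ <;>
      simp only [idealOf, tup, mem_canon_E, mem_canon_E', mem_canon_F', mem_canon_F,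
        Set.mem_setOf_eq, Set.mem_empty_iff_false, piLe_iff a b ha hab, piR,
        eP, e'P, f'P, fP, Fin.val_mk, iff_false, false_iff, iff_true, true_iff,
        false_or, or_false] <;>
      omega

lemma thr_inj {n m m' : ℕ} (hm : m ≤ n) (hm' : m' ≤ n)
    (h : ∀ k : Fin n, (m ≤ (k : ℕ) ↔ m' ≤ (k : ℕ))) : m = m' := by
  by_contra hne
  rcases Nat.lt_or_ge m m' with hlt | hge
  · have := h ⟨m, by omega⟩; simp only [Fin.val_mk] at this; omega
  · have := h ⟨m', by omega⟩; simp only [Fin.val_mk] at this; omega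

lemma low_inj {n d d' : ℕ} (hd : d ≤ n) (hd' : d' ≤ n)
    (h : ∀ k : Fin n, ((k : ℕ) < d ↔ (k : ℕ) < d')) : d = d' := by
  by_contra hne
  rcases Nat.lt_or_ge d d' with hlt | hge
  · have := h ⟨d, by omega⟩; simp only [Fin.val_mk] at this; omega
  · have := h ⟨d', by omega⟩; simp only [Fin.val_mk] at this; omega

lemma canon_inj (a b : ℕ) {t t' : ℕ × ℕ × ℕ × ℕ}
    (hb : t.1 ≤ a - 1 ∧ t.2.1 ≤ a - 2 ∧ t.2.2.1 ≤ b - 1 ∧ t.2.2.2 ≤ b - 1)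
    (hb' : t'.1 ≤ a - 1 ∧ t'.2.1 ≤ a - 2 ∧ t'.2.2.1 ≤ b - 1 ∧ t'.2.2.2 ≤ b - 1)
    (h : canon a b t = canon a b t') : t = t' := by
  have e := Set.ext_iff.mp h
  obtain ⟨m1, m2, d3, d4⟩ := t
  obtain ⟨m1', m2', d3', d4'⟩ := t'
  simp only at hb hb'
  simp only [Prod.mk.injEq]
  refine ⟨?_, ?_, ?_, ?_⟩
  · exact thr_inj hb.1 hb'.1 (fun k => by simpa using e (Sum.inl k))
  · exact thr_inj hb.2.1 hb'.2.1 (fun k => by simpa using e (Sum.inr (Sum.inl k)))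
  · exact low_inj hb.2.2.1 hb'.2.2.1
      (fun k => by simpa using e (Sum.inr (Sum.inr (Sum.inl k))))
  · exact low_inj hb.2.2.2 hb'.2.2.2
      (fun k => by simpa using e (Sum.inr (Sum.inr (Sum.inr k))))

lemma tup_bounds (a b : ℕ) (ha : 2 ≤ a) (hab : a ≤ b) (c : IdealIdx a b) :
    (tup a b c).1 ≤ a - 1 ∧ (tup a b c).2.1 ≤ a - 2 ∧
      (tup a b c).2.2.1 ≤ b - 1 ∧ (tup a b c).2.2.2 ≤ b - 1 := by
  cases c <;> exact ⟨by simp only [tup]; omega, by simp only [tup]; omega,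
    by simp only [tup]; omega, by simp only [tup]; omega⟩

lemma E_congr {a b i i' : ℕ} (h : i = i') {h1 h2 h1' h2'} :
    (IdealIdx.E i h1 h2 : IdealIdx a b) = .E i' h1' h2' := by subst h; rfl
lemma F_congr {a b j j' : ℕ} (h : j = j') {h1 h2 h1' h2'} :
    (IdealIdx.F j h1 h2 : IdealIdx a b) = .F j' h1' h2' := by subst h; rfl
lemma EF_congr {a b i i2 j j2 : ℕ} (h : i = i2) (h' : j = j2) {h1 h2 h3 h4 h1' h2' h3' h4'} :
    (IdealIdx.EF i j h1 h2 h3 h4 : IdealIdx a b) = .EF i2 j2 h1' h2' h3' h4' := by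
  subst h; subst h'; rfl
lemma EE_congr {a b i i2 i' i2' : ℕ} (h : i = i2) (h' : i' = i2') {h1 h2 h3 h1' h2' h3'} :
    (IdealIdx.EE i i' h1 h2 h3 : IdealIdx a b) = .EE i2 i2' h1' h2' h3' := by
  subst h; subst h'; rfl
lemma EEF_congr {a b i i2 i' i2' j j2 : ℕ} (e1 : i = i2) (e2 : i' = i2') (e3 : j = j2)
    {h1 h2 h3 h4 h5 h1' h2' h3' h4' h5'} :
    (IdealIdx.EEF i i' j h1 h2 h3 h4 h5 : IdealIdx a b) = .EEF i2 i2' j2 h1' h2' h3' h4' h5' := by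
  subst e1; subst e2; subst e3; rfl
lemma FF_congr {a b j' j2' j j2 : ℕ} (e1 : j' = j2') (e2 : j = j2) {h1 h2 h3 h1' h2' h3'} :
    (IdealIdx.FF j' j h1 h2 h3 : IdealIdx a b) = .FF j2' j2 h1' h2' h3' := by
  subst e1; subst e2; rfl
lemma EFF_congr {a b i i2 j' j2' j j2 : ℕ} (e1 : i = i2) (e2 : j' = j2') (e3 : j = j2)
    {h1 h2 h3 h4 h5 h1' h2' h3' h4' h5'} :
    (IdealIdx.EFF i j' j h1 h2 h3 h4 h5 : IdealIdx a b) = .EFF i2 j2' j2 h1' h2' h3' h4' h5' := by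
  subst e1; subst e2; subst e3; rfl
lemma EEFF_congr {a b i i2 i' i2' j' j2' j j2 : ℕ} (e1 : i = i2) (e2 : i' = i2')
    (e3 : j' = j2') (e4 : j = j2) {h1 h2 h3 h4 h5 h6 h1' h2' h3' h4' h5' h6'} :
    (IdealIdx.EEFF i i' j' j h1 h2 h3 h4 h5 h6 : IdealIdx a b)
      = .EEFF i2 i2' j2' j2 h1' h2' h3' h4' h5' h6' := by
  subst e1; subst e2; subst e3; subst e4; rfl

lemma tup_inj (a b : ℕ) (ha : 2 ≤ a) (hab : a ≤ b) {c c' : IdealIdx a b}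
    (h : tup a b c = tup a b c') : c = c' := by
  cases c <;> cases c' <;>
    simp only [tup, Prod.mk.injEq] at h ⊢ <;>
    first
      | rfl
      | (exfalso; omega)
      | exact E_congr (by omega)
      | exact F_congr (by omega)
      | exact EF_congr (by omega) (by omega)
      | exact EE_congr (by omega) (by omega)
      | exact FF_congr (by omega) (by omega)
      | exact EEF_congr (by omega) (by omega) (by omega)
      | exact EFF_congr (by omega) (by omega) (by omega)
      | exact EEFF_congr (by omega) (by omega) (by omega) (by omega)

lemma idealOf_isIdeal (a b : ℕ) (ha : 2 ≤ a) (hab : a ≤ b) (c : IdealIdx a b) :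
    IsPosetIdeal a b (idealOf a b ha hab c) := by
  cases c <;> intro x hx y hyx <;>
    simp only [idealOf, Set.mem_setOf_eq, Set.mem_empty_iff_false] at hx ⊢
  · exact hyx.trans hx
  · exact hyx.trans hx
  · exact hx.imp hyx.trans hyx.trans
  · exact hx.imp hyx.trans hyx.trans
  · exact hx.imp hyx.trans (Or.imp hyx.trans hyx.trans)
  · exact hx.imp hyx.trans hyx.trans
  · exact hx.imp hyx.trans (Or.imp hyx.trans hyx.trans)
  · exact hx.imp hyx.trans (Or.imp hyx.trans (Or.imp hyx.trans hyx.trans))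

lemma exists_idx (a b m1 m2 d3 d4 : ℕ) (ha : 2 ≤ a) (hab : a ≤ b)
    (hb1 : m1 ≤ a - 1) (hb2 : m2 ≤ a - 2) (hb3 : d3 ≤ b - 1) (hb4 : d4 ≤ b - 1)
    (hc2 : m2 < a - 2 → m1 ≤ m2 ∧ 1 ≤ d3)
    (hc3 : 1 ≤ d3 → d3 ≤ d4 ∧ m1 ≤ a - 2) :
    ∃ c : IdealIdx a b, tup a b c = (m1, m2, d3, d4) := by
  rcases Nat.lt_or_ge m2 (a - 2) with h2 | h2
  · obtain ⟨hm12, hd31⟩ := hc2 h2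
    obtain ⟨hd34, hm1a⟩ := hc3 hd31
    rcases Nat.lt_or_ge d3 2 with h3 | h3
    · rcases Nat.lt_or_ge d4 2 with h4 | h4
      · exact ⟨.EE (m1 + 1) (m2 + 2) (by omega) (by omega) (by omega),
          by simp only [tup, Prod.mk.injEq, and_true, true_and]; omega⟩
      · exact ⟨.EEF (m1 + 1) (m2 + 2) (d4 + 1) (by omega) (by omega) (by omega)
          (by omega) (by omega), by simp only [tup, Prod.mk.injEq, and_true, true_and]; omega⟩
    · exact ⟨.EEFF (m1 + 1) (m2 + 2) d3 (d4 + 1) (by omega) (by omega) (by omega)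
        (by omega) (by omega) (by omega), by simp only [tup, Prod.mk.injEq, and_true, true_and]; omega⟩
  · rcases Nat.lt_or_ge d3 1 with h3 | h3
    · rcases Nat.lt_or_ge d4 1 with h4 | h4
      · rcases Nat.lt_or_ge m1 (a - 1) with h1 | h1
        · exact ⟨.E (m1 + 1) (by omega) (by omega),
            by simp only [tup, Prod.mk.injEq, and_true, true_and]; omega⟩
        · exact ⟨.empty, by simp only [tup, Prod.mk.injEq, and_true, true_and]; omega⟩
      · rcases Nat.lt_or_ge m1 (a - 1) with h1 | h1
        · exact ⟨.EF (m1 + 1) (d4 + 1) (by omega) (by omega) (by omega) (by omega),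
            by simp only [tup, Prod.mk.injEq, and_true, true_and]; omega⟩
        · exact ⟨.F (d4 + 1) (by omega) (by omega),
            by simp only [tup, Prod.mk.injEq, and_true, true_and]; omega⟩
    · obtain ⟨hd34, hm1a⟩ := hc3 h3
      rcases Nat.lt_or_ge m1 (a - 2) with h1 | h1
      · exact ⟨.EFF (m1 + 1) d3 (d4 + 1) (by omega) (by omega) (by omega) (by omega)
          (by omega), by simp only [tup, Prod.mk.injEq, and_true, true_and]; omega⟩
      · exact ⟨.FF d3 (d4 + 1) (by omega) (by omega) (by omega),
          by simp only [tup, Prod.mk.injEq, and_true, true_and]; omega⟩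


lemma ideal_mem_range (a b : ℕ) (ha : 2 ≤ a) (hab : a ≤ b) (I : Set (PiElt a b))
    (hI : IsPosetIdeal a b I) : ∃ c : IdealIdx a b, idealOf a b ha hab c = I := by
  classical
  set S1 : Set ℕ := insert (a - 1) {n | ∃ k : Fin (a - 1), (k : ℕ) = n ∧ Sum.inl k ∈ I}
    with hS1
  set S2 : Set ℕ := insert (a - 2) {n | ∃ k : Fin (a - 2), (k : ℕ) = n ∧ Sum.inr (Sum.inl k) ∈ I}
    with hS2
  set S3 : Set ℕ := {n | ∀ k : Fin (b - 1), n ≤ (k : ℕ) → Sum.inr (Sum.inr (Sum.inl k)) ∉ I}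
    with hS3
  set S4 : Set ℕ := {n | ∀ k : Fin (b - 1), n ≤ (k : ℕ) → Sum.inr (Sum.inr (Sum.inr k)) ∉ I}
    with hS4
  set m1 := sInf S1 with hm1def
  set m2 := sInf S2 with hm2def
  set d3 := sInf S3 with hd3def
  set d4 := sInf S4 with hd4def
  have hne1 : S1.Nonempty := ⟨a - 1, Set.mem_insert _ _⟩
  have hne2 : S2.Nonempty := ⟨a - 2, Set.mem_insert _ _⟩
  have hmem3 : (b - 1) ∈ S3 := fun k hk => absurd k.isLt (by omega)
  have hmem4 : (b - 1) ∈ S4 := fun k hk => absurd k.isLt (by omega)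
  have hb1 : m1 ≤ a - 1 := Nat.sInf_le (Set.mem_insert _ _)
  have hb2 : m2 ≤ a - 2 := Nat.sInf_le (Set.mem_insert _ _)
  have hb3 : d3 ≤ b - 1 := Nat.sInf_le hmem3
  have hb4 : d4 ≤ b - 1 := Nat.sInf_le hmem4
  -- characterizations
  have hch1 : ∀ k : Fin (a - 1), (Sum.inl k ∈ I ↔ m1 ≤ (k : ℕ)) := by
    intro k
    constructor
    · intro hk
      exact Nat.sInf_le (Set.mem_insert_iff.mpr (Or.inr ⟨k, rfl, hk⟩))
    · intro hk
      have hmem := Nat.sInf_mem hne1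
      rcases Set.mem_insert_iff.mp hmem with h | ⟨k0, hk0v, hk0⟩
      · exfalso; have := k.isLt; omega
      · exact hI _ hk0 _ ((piLe_iff a b ha hab _ _).mpr (by simp only [piR]; omega))
  have hch2 : ∀ k : Fin (a - 2), (Sum.inr (Sum.inl k) ∈ I ↔ m2 ≤ (k : ℕ)) := by
    intro k
    constructor
    · intro hk
      exact Nat.sInf_le (Set.mem_insert_iff.mpr (Or.inr ⟨k, rfl, hk⟩))
    · intro hk
      have hmem := Nat.sInf_mem hne2
      rcases Set.mem_insert_iff.mp hmem with h | ⟨k0, hk0v, hk0⟩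
      · exfalso; have := k.isLt; omega
      · exact hI _ hk0 _ ((piLe_iff a b ha hab _ _).mpr (by simp only [piR]; omega))
  have hch3 : ∀ k : Fin (b - 1), (Sum.inr (Sum.inr (Sum.inl k)) ∈ I ↔ (k : ℕ) < d3) := by
    intro k
    constructor
    · intro hk
      by_contra hlt
      push_neg at hlt
      exact Nat.sInf_mem ⟨_, hmem3⟩ k hlt hk
    · intro hk
      by_contra hnot
      have hmem : (k : ℕ) ∈ S3 := by
        intro k' hk' hk'I
        exact hnot (hI _ hk'I _ ((piLe_iff a b ha hab _ _).mpr (by simp only [piR]; omega)))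
      have := Nat.sInf_le hmem
      omega
  have hch4 : ∀ k : Fin (b - 1), (Sum.inr (Sum.inr (Sum.inr k)) ∈ I ↔ (k : ℕ) < d4) := by
    intro k
    constructor
    · intro hk
      by_contra hlt
      push_neg at hlt
      exact Nat.sInf_mem ⟨_, hmem4⟩ k hlt hk
    · intro hk
      by_contra hnot
      have hmem : (k : ℕ) ∈ S4 := by
        intro k' hk' hk'I
        exact hnot (hI _ hk'I _ ((piLe_iff a b ha hab _ _).mpr (by simp only [piR]; omega)))
      have := Nat.sInf_le hmem
      omega
  -- constraints
  have hc2 : m2 < a - 2 → m1 ≤ m2 ∧ 1 ≤ d3 := by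
    intro h2
    have hk2 : Sum.inr (Sum.inl (⟨m2, h2⟩ : Fin (a - 2))) ∈ I :=
      (hch2 _).mpr (by simp only [Fin.val_mk]; omega)
    constructor
    · have he : Sum.inl (⟨m2, by omega⟩ : Fin (a - 1)) ∈ I :=
        hI _ hk2 _ ((piLe_iff a b ha hab _ _).mpr (by simp only [piR, Fin.val_mk]; try omega))
      have := (hch1 _).mp he
      simp only [Fin.val_mk] at this
      omega
    · have hf' : Sum.inr (Sum.inr (Sum.inl (⟨0, by omega⟩ : Fin (b - 1)))) ∈ I :=
        hI _ hk2 _ ((piLe_iff a b ha hab _ _).mpr (by simp only [piR, Fin.val_mk]; try omega))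
      have := (hch3 _).mp hf'
      simp only [Fin.val_mk] at this
      omega
  have hc3 : 1 ≤ d3 → d3 ≤ d4 ∧ m1 ≤ a - 2 := by
    intro h3
    have hf' : Sum.inr (Sum.inr (Sum.inl (⟨d3 - 1, by omega⟩ : Fin (b - 1)))) ∈ I :=
      (hch3 _).mpr (by simp only [Fin.val_mk]; omega)
    constructor
    · have hf : Sum.inr (Sum.inr (Sum.inr (⟨d3 - 1, by omega⟩ : Fin (b - 1)))) ∈ I :=
        hI _ hf' _ ((piLe_iff a b ha hab _ _).mpr (by simp only [piR, Fin.val_mk]; try omega))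
      have := (hch4 _).mp hf
      simp only [Fin.val_mk] at this
      omega
    · have he : Sum.inl (⟨a - 2, by omega⟩ : Fin (a - 1)) ∈ I :=
        hI _ hf' _ ((piLe_iff a b ha hab _ _).mpr (by simp only [piR, Fin.val_mk]; try omega))
      have := (hch1 _).mp he
      simp only [Fin.val_mk] at this
      omega
  -- I is the canonical set of its tuple
  have hIc : I = canon a b (m1, m2, d3, d4) := by
    ext q
    rcases q with k | k | k | k
    · simpa using hch1 k
    · simpa using hch2 k
    · simpa using hch3 k
    · simpa using hch4 k
  -- find the index whose tuple is (m1, m2, d3, d4)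
  have hex := exists_idx a b m1 m2 d3 d4 ha hab hb1 hb2 hb3 hb4 hc2 hc3
  obtain ⟨c, hc⟩ := hex
  refine ⟨c, ?_⟩
  rw [idealOf_eq_canon a b ha hab c, hc]
  exact hIc.symm

end PiClassify

/-- **Classification of the poset ideals of `Π_{a,b}` (display (3.3)).**
The poset ideals of `Π_{a,b}` are precisely the sets in the list parametrized by
`IdealIdx a b`, and all of these poset ideals are pairwise distinct. -/
theorem posetIdeals_of_Piab (a b : ℕ) (ha : 2 ≤ a) (hab : a ≤ b) :
    Function.Injective (idealOf a b ha hab) ∧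
      Set.range (idealOf a b ha hab) = {I : Set (PiElt a b) | IsPosetIdeal a b I} := by
  constructor
  · intro c c' h
    rw [PiClassify.idealOf_eq_canon a b ha hab c,
      PiClassify.idealOf_eq_canon a b ha hab c'] at h
    exact PiClassify.tup_inj a b ha hab
      (PiClassify.canon_inj a b (PiClassify.tup_bounds a b ha hab c)
        (PiClassify.tup_bounds a b ha hab c') h)
  · ext I
    simp only [Set.mem_range, Set.mem_setOf_eq]
    constructor
    · rintro ⟨c, rfl⟩
      exact PiClassify.idealOf_isIdeal a b ha hab c
    · intro hI
      exact PiClassify.ideal_mem_range a b ha hab I hI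
end

section
/- Let T be a tree on vertex set {1,…,d}. For each edge {i,j} of T with i < j, let v_{ij} = u_i + w_j ∈ ℤ^{2d}, where u_1,…,u_d, w_1,…,w_d denote the standard basis of ℤ^{2d}. Then the d−1 vectors v_{ij}, as {i,j} ranges over the edges of T, are linearly independent over ℚ. -/
/-- The vector `v_{ij} = u_i + w_j ∈ ℤ^{2d} ⊆ ℚ^{2d}` (exponent vector of the monomial
`x_i y_j`), where `u` is the standard basis indexed by `Sum.inl` and `w` the one indexed
by `Sum.inr`. -/
def edgeVec {d : ℕ} (i j : Fin d) : Fin d ⊕ Fin d → ℚ :=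
  Pi.single (Sum.inl i) 1 + Pi.single (Sum.inr j) 1

lemma edgeVec_apply_inl {d : ℕ} (i j c : Fin d) :
    edgeVec i j (Sum.inl c) = if c = i then 1 else 0 := by
  simp [edgeVec, Pi.single_apply]

lemma edgeVec_apply_inr {d : ℕ} (i j c : Fin d) :
    edgeVec i j (Sum.inr c) = if c = j then 1 else 0 := by
  simp [edgeVec, Pi.single_apply]

/-- In a connected acyclic graph, if `a` is adjacent to `c` and `a` is no farther
from `r` than `c`, then `c` is exactly one step farther. -/
lemma tree_dist_succ {V : Type*} {G : SimpleGraph V} (hc : G.Connected)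
    (ha : G.IsAcyclic) {r a c : V} (hadj : G.Adj a c)
    (hle : G.dist r a ≤ G.dist r c) : G.dist r c = G.dist r a + 1 := by
  haveI := Classical.decEq V
  have h1 : G.dist r c ≤ G.dist r a + 1 := by
    have := hc.dist_triangle (u := r) (v := a) (w := c)
    rwa [(SimpleGraph.dist_eq_one_iff_adj).2 hadj] at this
  by_contra hne
  have heq : G.dist r c = G.dist r a := le_antisymm (by omega) hle
  obtain ⟨p, hp, hpl⟩ := hc.exists_path_of_dist r a
  have hane : a ≠ c := hadj.ne
  have hcns : c ∉ p.support := by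
    intro hcs
    have hspec := p.take_spec hcs
    have hlen : (p.takeUntil c hcs).length + (p.dropUntil c hcs).length = p.length := by
      rw [← SimpleGraph.Walk.length_append, hspec]
    have hdrop : (p.dropUntil c hcs).length ≠ 0 := fun h0 =>
      hane (SimpleGraph.Walk.eq_of_length_eq_zero h0).symm
    have hdc : G.dist r c ≤ (p.takeUntil c hcs).length := SimpleGraph.dist_le _
    omega
  have hwp : (p.concat hadj).IsPath := by
    rw [← SimpleGraph.Walk.isPath_reverse_iff, SimpleGraph.Walk.reverse_concat,
      SimpleGraph.Walk.cons_isPath_iff]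
    exact ⟨hp.reverse, by simpa using hcns⟩
  obtain ⟨q, hq, hql⟩ := hc.exists_path_of_dist r c
  have huniq := ha.path_unique ⟨p.concat hadj, hwp⟩ ⟨q, hq⟩
  have hlen : (p.concat hadj).length = q.length := by
    rw [Subtype.ext_iff] at huniq
    exact congrArg SimpleGraph.Walk.length huniq
  rw [SimpleGraph.Walk.length_concat, hpl, hql] at hlen
  omega

/-- In a connected acyclic graph, a vertex cannot have two distinct neighbors both
at distance (from `r`) at most its own. -/
lemma tree_no_two_low_neighbors {V : Type*} {G : SimpleGraph V} (hc : G.Connected)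
    (ha : G.IsAcyclic) {r a b c : V} (hab : a ≠ b) (h1 : G.Adj a c) (h2 : G.Adj b c)
    (hda : G.dist r a ≤ G.dist r c) (hdb : G.dist r b ≤ G.dist r c) : False := by
  have e1 : G.dist r c = G.dist r a + 1 := tree_dist_succ hc ha h1 hda
  have e2 : G.dist r c = G.dist r b + 1 := tree_dist_succ hc ha h2 hdb
  obtain ⟨p, hp, hpl⟩ := hc.exists_path_of_dist r a
  obtain ⟨q, hq, hql⟩ := hc.exists_path_of_dist r b
  have hwa : (p.concat h1).IsPath :=
    (p.concat h1).isPath_of_length_eq_dist (by rw [SimpleGraph.Walk.length_concat, hpl, e1])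
  have hwb : (q.concat h2).IsPath :=
    (q.concat h2).isPath_of_length_eq_dist (by rw [SimpleGraph.Walk.length_concat, hql, e2])
  have huniq := ha.path_unique ⟨p.concat h1, hwa⟩ ⟨q.concat h2, hwb⟩
  rw [Subtype.ext_iff] at huniq
  have hsup := congrArg (fun w : G.Walk r c => w.reverse.support) huniq
  simp only [SimpleGraph.Walk.reverse_concat, SimpleGraph.Walk.support_cons] at hsup
  have h3 : p.reverse.support = q.reverse.support := by
    exact List.cons_injective hsup
  rw [p.reverse.support_eq_cons, q.reverse.support_eq_cons] at h3
  exact hab (List.head_eq_of_cons_eq h3)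

/-- A nonempty finite set of (ordered) edges of a tree contains an edge having an
endpoint incident to no other edge in the set (a "leaf" edge). -/
lemma exists_leaf_edge {d : ℕ} {T : SimpleGraph (Fin d)} (hconn : T.Connected)
    (hacyc : T.IsAcyclic)
    (s : Finset {p : Fin d × Fin d // p.1 < p.2 ∧ T.Adj p.1 p.2}) (hs : s.Nonempty) :
    ∃ e ∈ s, ∃ c : Fin d, (e.val.1 = c ∨ e.val.2 = c) ∧
      ∀ e' ∈ s, (e'.val.1 = c ∨ e'.val.2 = c) → e' = e := by
  obtain ⟨e0, he0⟩ := hs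
  set r : Fin d := e0.val.1 with hr
  obtain ⟨c, hcA, hcmax⟩ :=
    (s.image (fun e => e.val.1) ∪ s.image (fun e => e.val.2)).exists_max_image
      (fun v => T.dist r v)
      ⟨e0.val.1, Finset.mem_union_left _ (Finset.mem_image.2 ⟨e0, he0, rfl⟩)⟩
  have hbound : ∀ e ∈ s, T.dist r e.val.1 ≤ T.dist r c ∧ T.dist r e.val.2 ≤ T.dist r c := by
    intro e he
    exact ⟨hcmax _ (Finset.mem_union_left _ (Finset.mem_image.2 ⟨e, he, rfl⟩)),
      hcmax _ (Finset.mem_union_right _ (Finset.mem_image.2 ⟨e, he, rfl⟩))⟩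
  have hcinc : ∃ e ∈ s, e.val.1 = c ∨ e.val.2 = c := by
    rcases Finset.mem_union.1 hcA with h | h
    · obtain ⟨e, he, hec⟩ := Finset.mem_image.1 h
      exact ⟨e, he, Or.inl hec⟩
    · obtain ⟨e, he, hec⟩ := Finset.mem_image.1 h
      exact ⟨e, he, Or.inr hec⟩
  obtain ⟨e, he, hec⟩ := hcinc
  refine ⟨e, he, c, hec, ?_⟩
  -- uniqueness: any two edges of s incident to c are equal
  intro e' he' hec'
  by_contra hne
  -- "other" endpoints of e and e'
  have other : ∀ f : {p : Fin d × Fin d // p.1 < p.2 ∧ T.Adj p.1 p.2},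
      (f.val.1 = c ∨ f.val.2 = c) →
      ∃ x : Fin d, T.Adj x c ∧ (f.val = (c, x) ∨ f.val = (x, c)) := by
    rintro f (h | h)
    · exact ⟨f.val.2, by rw [← h]; exact f.prop.2.symm,
        Or.inl (by rw [← h])⟩
    · exact ⟨f.val.1, by rw [← h]; exact f.prop.2, Or.inr (by rw [← h])⟩
  obtain ⟨x, hx, hfx⟩ := other e hec
  obtain ⟨y, hy, hfy⟩ := other e' hec'
  have hxy : x ≠ y := by
    intro hxyeq
    subst hxyeq
    apply hne
    apply Subtype.ext
    rcases hfx with h1 | h1 <;> rcases hfy with h2 | h2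
    · rw [h1, h2]
    · exfalso
      have hlt1 : c < x := by have := e.prop.1; rw [h1] at this; exact this
      have hlt2 : x < c := by have := e'.prop.1; rw [h2] at this; exact this
      exact absurd hlt1 (not_lt.2 hlt2.le)
    · exfalso
      have hlt1 : x < c := by have := e.prop.1; rw [h1] at this; exact this
      have hlt2 : c < x := by have := e'.prop.1; rw [h2] at this; exact this
      exact absurd hlt1 (not_lt.2 hlt2.le)
    · rw [h1, h2]
  have hdx : T.dist r x ≤ T.dist r c := by
    rcases hfx with h1 | h1
    · have := (hbound e he).2; rw [h1] at this; exact this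
    · have := (hbound e he).1; rw [h1] at this; exact this
  have hdy : T.dist r y ≤ T.dist r c := by
    rcases hfy with h1 | h1
    · have := (hbound e' he').2; rw [h1] at this; exact this
    · have := (hbound e' he').1; rw [h1] at this; exact this
  exact tree_no_two_low_neighbors hconn hacyc hxy hx hy hdx hdy

/-- **Example 4.3 (i), key step.** For a tree `T` on `d` vertices, the `d−1` vectors
`v_{ij} = u_i + w_j` attached to the edges `{i,j}` (`i < j`) of `T` are linearly
independent over `ℚ`. -/
theorem tree_edgeVecs_linearIndependent (d : ℕ) (T : SimpleGraph (Fin d))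
    (hconn : T.Connected) (hacyc : T.IsAcyclic) :
    LinearIndependent ℚ
      (fun e : {p : Fin d × Fin d // p.1 < p.2 ∧ T.Adj p.1 p.2} =>
        edgeVec e.val.1 e.val.2) := by
  rw [linearIndependent_iff']
  intro s
  induction s using Finset.strongInductionOn with
  | _ s IH =>
    intro g hsum i hi
    have hs : s.Nonempty := ⟨i, hi⟩
    obtain ⟨e, he, c, hec, huniq⟩ := exists_leaf_edge hconn hacyc s hs
    -- the coordinate where only e contributes
    have hge : g e = 0 := by
      rcases hec with hec | hec
      · have hz := congrFun hsum (Sum.inl c)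
        simp only [Finset.sum_apply, Pi.smul_apply, Pi.zero_apply, smul_eq_mul,
          edgeVec_apply_inl] at hz
        rw [Finset.sum_eq_single_of_mem e he] at hz
        · rwa [hec, if_pos rfl, mul_one] at hz
        · intro b hb hbe
          have : ¬ (c = b.val.1) := fun h =>
            hbe (huniq b hb (Or.inl h.symm))
          rw [if_neg this, mul_zero]
      · have hz := congrFun hsum (Sum.inr c)
        simp only [Finset.sum_apply, Pi.smul_apply, Pi.zero_apply, smul_eq_mul,
          edgeVec_apply_inr] at hz
        rw [Finset.sum_eq_single_of_mem e he] at hz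
        · rwa [hec, if_pos rfl, mul_one] at hz
        · intro b hb hbe
          have : ¬ (c = b.val.2) := fun h =>
            hbe (huniq b hb (Or.inr h.symm))
          rw [if_neg this, mul_zero]
    by_cases hie : i = e
    · rw [hie]; exact hge
    · have hsum' : ∑ e' ∈ s.erase e, g e' • edgeVec e'.val.1 e'.val.2 = 0 := by
        rw [Finset.sum_erase s (by rw [hge, zero_smul])]
        exact hsum
      exact IH (s.erase e) (Finset.erase_ssubset he) g hsum' i
        (Finset.mem_erase.2 ⟨hie, hi⟩)
end

section
/- Let G be a unicyclic graph on vertex set {1,…,d} (a finite simple connected graph with exactly one cycle, hence exactly d edges) whose unique cycle has odd length. For each edge {i,j} of G with i < j, let v_{ij} = u_i + w_j ∈ ℤ^{2d}, where u_1,…,u_d, w_1,…,w_d denote the standard basis of ℤ^{2d}. Then the d vectors v_{ij}, as {i,j} ranges over the edges of G, are linearly independent over ℚ. -/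
/-- **Example 4.3 (ii), key step.** Let `G` be a unicyclic graph on `d` vertices (a finite
simple connected graph with exactly one cycle, hence exactly `d` edges) whose unique cycle
has odd length (i.e. every cycle in `G` is odd). Then the `d` vectors `v_{ij} = u_i + w_j`
attached to the edges `{i,j}` (`i < j`) of `G` are linearly independent over `ℚ`. -/
theorem odd_unicyclic_edgeVecs_linearIndependent (d : ℕ) (G : SimpleGraph (Fin d))
    [Fintype G.edgeSet] (hconn : G.Connected) (hcard : G.edgeFinset.card = d)
    (hodd : ∀ (v : Fin d) (c : G.Walk v v), c.IsCycle → Odd c.length) :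
    LinearIndependent ℚ
      (fun e : {p : Fin d × Fin d // p.1 < p.2 ∧ G.Adj p.1 p.2} =>
        edgeVec e.val.1 e.val.2) := by
  classical
  set ι := {p : Fin d × Fin d // p.1 < p.2 ∧ G.Adj p.1 p.2} with hι
  -- the "signless incidence" vectors in ℚ^d
  set s : ι → (Fin d → ℚ) := fun e => Pi.single e.val.1 1 + Pi.single e.val.2 1 with hs
  -- projection ℚ^(d⊕d) → ℚ^d adding the two halves
  set π : ((Fin d ⊕ Fin d) → ℚ) →ₗ[ℚ] (Fin d → ℚ) :=
    LinearMap.funLeft ℚ ℚ Sum.inl + LinearMap.funLeft ℚ ℚ Sum.inr with hπ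
  have hcomp : π ∘ (fun e : ι => edgeVec e.val.1 e.val.2) = s := by
    funext e
    funext v
    simp only [hπ, hs, Function.comp_apply, LinearMap.add_apply, LinearMap.funLeft_apply,
      edgeVec, Pi.add_apply]
    by_cases h1 : v = e.val.1 <;> by_cases h2 : v = e.val.2 <;>
      simp [h1, h2, Pi.single_apply, Sum.inl.injEq, Sum.inr.injEq]
  suffices hind : LinearIndependent ℚ s by
    exact LinearIndependent.of_comp π (hcomp ▸ hind)
  -- membership of e_a + e_c in the span, for any edge
  have hedge : ∀ a c : Fin d, G.Adj a c →
      (Pi.single a 1 + Pi.single c 1 : Fin d → ℚ) ∈ Submodule.span ℚ (Set.range s) := by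
    intro a c hadj
    rcases lt_or_gt_of_ne hadj.ne with h | h
    · exact Submodule.subset_span ⟨⟨(a, c), h, hadj⟩, rfl⟩
    · rw [add_comm]
      exact Submodule.subset_span ⟨⟨(c, a), h, hadj.symm⟩, rfl⟩
  -- telescoping along walks
  have key : ∀ (a b : Fin d) (p : G.Walk a b),
      (Pi.single a 1 : Fin d → ℚ) - (-1 : ℚ) ^ p.length • (Pi.single b 1 : Fin d → ℚ) ∈
        Submodule.span ℚ (Set.range s) := by
    intro a b p
    induction p with
    | nil => simp
    | @cons a c b hadj q ih =>
      have h1 := hedge a c hadj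
      have heq : (Pi.single a 1 : Fin d → ℚ) -
          (-1 : ℚ) ^ (SimpleGraph.Walk.cons hadj q).length • (Pi.single b 1 : Fin d → ℚ) =
          ((Pi.single a 1 : Fin d → ℚ) + Pi.single c 1) -
            ((Pi.single c 1 : Fin d → ℚ) - (-1 : ℚ) ^ q.length • (Pi.single b 1 : Fin d → ℚ)) := by
        rw [SimpleGraph.Walk.length_cons, pow_succ, mul_neg_one, neg_smul, sub_neg_eq_add]
        abel
      rw [heq]
      exact Submodule.sub_mem _ h1 ih
  -- existence of an odd cycle
  have hnac : ¬ G.IsAcyclic := by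
    intro hac
    have ht : G.IsTree := ⟨hconn, hac⟩
    have h1 := ht.card_edgeFinset
    have h2 : Fintype.card (Fin d) = d := Fintype.card_fin d
    have : Nonempty (Fin d) := hconn.nonempty
    have hd : 0 < d := by
      rcases this with ⟨v⟩; exact v.pos
    omega
  rw [SimpleGraph.IsAcyclic] at hnac
  push_neg at hnac
  obtain ⟨v₀, c₀, hc₀⟩ := hnac
  have hodd₀ : Odd c₀.length := hodd v₀ c₀ hc₀
  -- every basis vector is in the span
  have hsingle : ∀ x : Fin d,
      (Pi.single x 1 : Fin d → ℚ) ∈ Submodule.span ℚ (Set.range s) := by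
    intro x
    obtain ⟨p⟩ := hconn x v₀
    have hw := key x x (p.append (c₀.append p.reverse))
    have hlen : (p.append (c₀.append p.reverse)).length =
        p.length + (c₀.length + p.length) := by
      simp [SimpleGraph.Walk.length_append]
    have hodd' : Odd (p.append (c₀.append p.reverse)).length := by
      rw [hlen]
      rcases hodd₀ with ⟨k, hk⟩
      exact ⟨p.length + k, by omega⟩
    rw [hodd'.neg_one_pow, neg_smul, one_smul, sub_neg_eq_add] at hw
    have : (Pi.single x 1 : Fin d → ℚ) =
        (2 : ℚ)⁻¹ • ((Pi.single x 1 : Fin d → ℚ) + Pi.single x 1) := by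
      rw [smul_add]
      norm_num
      rw [← add_smul]
      norm_num
    rw [this]
    exact Submodule.smul_mem _ _ hw
  -- span is everything
  have hspan : ⊤ ≤ Submodule.span ℚ (Set.range s) := by
    rw [← (Pi.basisFun ℚ (Fin d)).span_eq]
    apply Submodule.span_le.mpr
    rintro _ ⟨i, rfl⟩
    simpa [Pi.basisFun_apply] using hsingle i
  -- cardinality
  have hcardι : Fintype.card ι = d := by
    have e : ι ≃ G.edgeSet := by
      refine Equiv.ofBijective (fun p => ⟨s(p.val.1, p.val.2), p.prop.2⟩) ⟨?_, ?_⟩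
      · rintro ⟨⟨a, b⟩, hab, hadj⟩ ⟨⟨c, e⟩, hce, hadj'⟩ h
        have h := Sym2.eq_iff.mp (congrArg Subtype.val h)
        rcases h with ⟨rfl, rfl⟩ | ⟨rfl, rfl⟩
        · rfl
        · exact absurd (hab.trans hce) (lt_irrefl _)
      · rintro ⟨e, he⟩
        revert he
        refine e.ind ?_
        intro i j he
        have hadj : G.Adj i j := (SimpleGraph.mem_edgeSet G).mp he
        rcases lt_or_gt_of_ne hadj.ne with h | h
        · exact ⟨⟨(i, j), h, hadj⟩, rfl⟩
        · exact ⟨⟨(j, i), h, hadj.symm⟩, Subtype.ext (Sym2.eq_swap)⟩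
    rw [Fintype.card_congr e, ← SimpleGraph.edgeFinset_card, hcard]
  exact linearIndependent_of_top_le_span_of_card_eq_finrank hspan
    (by rw [hcardι, Module.finrank_fintype_fun_eq_card, Fintype.card_fin])
end
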